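/- arXiv:0804.4533 — 3 statements merged into one kernel-verified Lean document; each statement's English description precedes it below -/
import Mathlib

section
/- Let (X,d_X) be a metric space. If for some n ∈ ℕ there exists a sequence of dilatations fₘ : Bⁿ(0,kₘ) → X with dilatation constants Cₘ ≥ 1, where Bⁿ(0,kₘ) ⊂ ℤⁿ is the ℓ¹-ball of radius kₘ and kₘ → ∞, then asdim_AN(X,d_X) ≥ n. -/
/-- There is an `s`-scale chain inside `U` joining `x` to `y`. -/
def ScaleChain {X : Type*} (d : X → X → ℝ) (s : ℝ) (U : Set X) (x y : X) : Prop :=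
  ∃ (n : ℕ) (c : Fin (n + 1) → X), (∀ i, c i ∈ U) ∧ c 0 = x ∧ c (Fin.last n) = y ∧
    ∀ i : Fin n, d (c i.castSucc) (c i.succ) < s

/-- Asymptotic Assouad-Nagata dimension at most `n`: a linear (affine)
`n`-dimensional control function exists. -/
def ASDimANLe {X : Type*} (d : X → X → ℝ) (n : ℕ) : Prop :=
  ∃ C : ℝ, 0 < C ∧ ∃ k : ℝ, ∀ s : ℝ, 0 < s → ∃ U : Fin (n + 1) → Set X,
    (∀ x, ∃ i, x ∈ U i) ∧ ∀ i, ∀ x y, ScaleChain d s (U i) x y → d x y ≤ C * s + k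

/-!
Pull a cover of `X` by `n` sets back to the grid `{0, …, N}ⁿ` along a dilatation, and label a
grid point of colour `i` by `(i, -)` or `(i, +)` according as it is or is not joined, by an
`s`-chain of colour `i`, to the face `xᵢ = N`. A point of colour `i` on that face is trivially
joined to it, and neighbours of the same colour are joined to it together, being `s`-close. So,
unless some colour class contains a chain crossing the grid from `xᵢ = 0` to `xᵢ = N`, there is
no `(i, -)` on `xᵢ = 0`, no `(i, +)` on `xᵢ = N` and no pair of neighbours labelled `(i, +)`,
`(i, -)`, contradicting a discrete Poincaré–Miranda theorem. A crossing chain has length at least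
`C N` at scale `C (n + 1)`, so no linear control function exists once `N` is large.

The discrete Poincaré–Miranda theorem is a Sperner-type parity count on Kuhn simplices. Call a
`d`-simplex rainbow if its labels are the `+` labels of its `d` directions and one more `+` label.
There is exactly one rainbow `0`-simplex, none of dimension `n`, and the rainbow simplices of
dimensions `d` and `d + 1` both have the parity of the doors of `(d + 1)`-simplices, the facets
labelled by exactly the `+` labels of the directions: a simplex has an odd number of doors iff it
is rainbow, and pairing each door with the neighbouring simplex through it leaves exactly the
doors on the boundary, which are the rainbow `d`-simplices.
-/

open Finset

lemma image_compl_singleton_eq_image_univ {α β : Type*} [Fintype α] [DecidableEq α]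
    [DecidableEq β] {f : α → β} {a b : α} (hab : a ≠ b) (h : f a = f b) :
    ({a}ᶜ : Finset α).image f = univ.image f := by
  rw [← insert_compl_self a, image_insert, insert_eq_of_mem]
  exact mem_image.2 ⟨b, by simpa [eq_comm] using hab, h.symm⟩

lemma image_compl_singleton_eq_of_succAbove {d : ℕ} {β : Type*} [DecidableEq β]
    {f g : Fin (d + 1) → β} {a b : Fin (d + 1)} (h : ∀ l, f (a.succAbove l) = g (b.succAbove l)) :
    ({a}ᶜ : Finset (Fin (d + 1))).image f = ({b}ᶜ : Finset (Fin (d + 1))).image g := by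
  rw [← Fin.image_succAbove_univ, ← Fin.image_succAbove_univ, image_image, image_image]
  exact congrArg (image · univ) (funext h)

lemma ScaleChain.refl {X : Type*} (d : X → X → ℝ) (s : ℝ) {U : Set X} {x : X} (hx : x ∈ U) :
    ScaleChain d s U x x :=
  ⟨0, fun _ => x, fun _ => hx, rfl, rfl, fun i => i.elim0⟩

lemma ScaleChain.cons {X : Type*} {d : X → X → ℝ} {s : ℝ} {U : Set X} {x y z : X} (hx : x ∈ U)
    (hxy : d x y < s) (h : ScaleChain d s U y z) : ScaleChain d s U x z := by
  obtain ⟨k, c, hc, rfl, rfl, hstep⟩ := h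
  refine ⟨k + 1, Fin.cons x c, Fin.cases hx hc, rfl, by simp [← Fin.succ_last], Fin.cases ?_ ?_⟩
  · simpa using hxy
  · intro i
    simpa [← Fin.succ_castSucc] using hstep i

namespace DiscretePoincareMiranda

variable {n N d : ℕ}

def box (N : ℕ) : Set (Fin n → ℤ) := {v | ∀ i, 0 ≤ v i ∧ v i ≤ N}

/-- The labels `(i, true)` and `(i, false)` play the part of the signs `+` and `-` of the
`i`-th component of a Poincaré–Miranda map on the box. -/
def NoMinusOnBottom (N : ℕ) (lab : (Fin n → ℤ) → Fin n × Bool) : Prop :=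
  ∀ v ∈ box N, ∀ i, v i = 0 → lab v ≠ (i, false)

def NoPlusOnTop (N : ℕ) (lab : (Fin n → ℤ) → Fin n × Bool) : Prop :=
  ∀ v ∈ box N, ∀ i, v i = N → lab v ≠ (i, true)

def NoSignChange (N : ℕ) (lab : (Fin n → ℤ) → Fin n × Bool) : Prop :=
  ∀ u ∈ box N, ∀ v ∈ box N, u ≤ v → v ≤ u + 1 → (lab u).1 = (lab v).1 → (lab u).2 = (lab v).2

/-- A Kuhn simplex `(x, m)` of the grid `{0, …, N}ⁿ`, with vertices
`x, x + e (m 0), x + e (m 0) + e (m 1), …, x + e (m 0) + ⋯ + e (m (d - 1))`. -/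
abbrev KuhnSimplex (N n d : ℕ) := (Fin n → Fin (N + 1)) × (Fin d ↪ Fin n)

open Classical in
/-- The `i`-th coordinate of `e (m 0) + ⋯ + e (m (κ - 1))` when `m` is injective. -/
noncomputable def steps (m : Fin d → Fin n) (κ : ℕ) (i : Fin n) : ℤ :=
  if ∃ l : Fin d, (l : ℕ) < κ ∧ m l = i then 1 else 0

noncomputable def vertex (σ : KuhnSimplex N n d) (κ : ℕ) : Fin n → ℤ :=
  fun i => σ.1 i + steps σ.2 κ i

/-- Admissible simplices lie in the box, inside its coordinate face spanned by their
directions. -/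
def Admissible (σ : KuhnSimplex N n d) : Prop :=
  (∀ i ∉ Set.range σ.2, σ.1 i = 0) ∧ ∀ l, (σ.1 (σ.2 l) : ℕ) < N

section Steps

variable (m : Fin d → Fin n) (κ : ℕ) (i : Fin n)

lemma steps_nonneg : 0 ≤ steps m κ i := by
  unfold steps; split_ifs <;> norm_num

lemma steps_le_one : steps m κ i ≤ 1 := by
  unfold steps; split_ifs <;> norm_num

variable {m κ i}

lemma steps_eq_one (h : ∃ l : Fin d, (l : ℕ) < κ ∧ m l = i) : steps m κ i = 1 := by
  unfold steps; exact if_pos h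

lemma steps_eq_zero (h : ¬ ∃ l : Fin d, (l : ℕ) < κ ∧ m l = i) : steps m κ i = 0 := by
  unfold steps; exact if_neg h

lemma steps_eq_zero_of_notMem_range (h : i ∉ Set.range m) : steps m κ i = 0 :=
  steps_eq_zero fun ⟨l, _, hl⟩ => h ⟨l, hl⟩

lemma steps_mono {κ' : ℕ} (h : κ ≤ κ') : steps m κ i ≤ steps m κ' i := by
  by_cases h' : ∃ l : Fin d, (l : ℕ) < κ ∧ m l = i
  · obtain ⟨l, hl, hli⟩ := h'
    rw [steps_eq_one ⟨l, hl, hli⟩, steps_eq_one ⟨l, hl.trans_le h, hli⟩]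
  · rw [steps_eq_zero h']
    exact steps_nonneg m κ' i

lemma steps_congr {d' κ' : ℕ} {m' : Fin d' → Fin n} {i' : Fin n}
    (h : (∃ l : Fin d, (l : ℕ) < κ ∧ m l = i) ↔ ∃ l : Fin d', (l : ℕ) < κ' ∧ m' l = i') :
    steps m κ i = steps m' κ' i' := by
  unfold steps; exact if_congr h rfl rfl

end Steps

lemma vertex_mem_box {σ : KuhnSimplex N n d} (hσ : Admissible σ) (κ : ℕ) : vertex σ κ ∈ box N := by
  intro i
  have h0 := steps_nonneg σ.2 κ i
  have h1 := steps_le_one σ.2 κ i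
  by_cases hi : i ∈ Set.range σ.2
  · obtain ⟨l, rfl⟩ := hi
    have := hσ.2 l
    simp only [vertex]
    omega
  · rw [vertex, hσ.1 i hi, steps_eq_zero_of_notMem_range hi]
    simp

lemma vertex_le_vertex (σ : KuhnSimplex N n d) {κ κ' : ℕ} (h : κ ≤ κ') :
    vertex σ κ ≤ vertex σ κ' ∧ vertex σ κ' ≤ vertex σ κ + 1 := by
  refine ⟨fun i => ?_, fun i => ?_⟩ <;> simp only [vertex, Pi.add_apply, Pi.one_apply] <;>
    linarith [steps_mono (m := σ.2) (i := i) h, steps_nonneg σ.2 κ i, steps_le_one σ.2 κ' i]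

variable (lab : (Fin n → ℤ) → Fin n × Bool)

noncomputable def vertexLabel (σ : KuhnSimplex N n d) (k : Fin (d + 1)) : Fin n × Bool :=
  lab (vertex σ k)

def plusLabels (m : Fin d ↪ Fin n) : Finset (Fin n × Bool) :=
  univ.image fun l => (m l, true)

def IsDoor (σ : KuhnSimplex N n (d + 1)) (k : Fin (d + 2)) : Prop :=
  ({k}ᶜ : Finset (Fin (d + 2))).image (vertexLabel lab σ) = plusLabels σ.2

def IsRainbow (σ : KuhnSimplex N n d) : Prop :=
  ∃ j ∉ Set.range σ.2, univ.image (vertexLabel lab σ) = insert (j, true) (plusLabels σ.2)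

variable {lab}

lemma card_plusLabels (m : Fin d ↪ Fin n) : #(plusLabels m) = d := by
  rw [plusLabels, card_image_of_injective _ fun a b h => m.injective (congrArg Prod.fst h)]
  simp

lemma mk_true_mem_plusLabels {m : Fin d ↪ Fin n} {j : Fin n} :
    (j, true) ∈ plusLabels m ↔ j ∈ Set.range m := by
  simp [plusLabels]

section Counting

lemma vertexLabel_snd_eq (hadj : NoSignChange N lab) {σ : KuhnSimplex N n d} (hσ : Admissible σ)
    (k k' : Fin (d + 1))
    (h : (vertexLabel lab σ k).1 = (vertexLabel lab σ k').1) :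
    (vertexLabel lab σ k).2 = (vertexLabel lab σ k').2 := by
  rcases le_total (k : ℕ) k' with hk | hk
  · exact hadj _ (vertex_mem_box hσ k) _ (vertex_mem_box hσ k') (vertex_le_vertex σ hk).1
      (vertex_le_vertex σ hk).2 h
  · exact (hadj _ (vertex_mem_box hσ k') _ (vertex_mem_box hσ k) (vertex_le_vertex σ hk).1
      (vertex_le_vertex σ hk).2 h.symm).symm

lemma vertexLabel_ne_false (hbot : NoMinusOnBottom N lab) {σ : KuhnSimplex N n d}
    (hσ : Admissible σ) {j : Fin n} (hj : j ∉ Set.range σ.2)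
    (k : Fin (d + 1)) : vertexLabel lab σ k ≠ (j, false) :=
  hbot _ (vertex_mem_box hσ k) j (by simp [vertex, hσ.1 j hj, steps_eq_zero_of_notMem_range hj])

variable {σ : KuhnSimplex N n (d + 1)} {k : Fin (d + 2)}

lemma IsDoor.injOn (h : IsDoor lab σ k) :
    Set.InjOn (vertexLabel lab σ) (({k}ᶜ : Finset (Fin (d + 2))) : Set (Fin (d + 2))) :=
  injOn_of_card_image_eq (by rw [h, card_plusLabels, card_compl]; simp)

lemma isRainbow_of_isDoor (hbot : NoMinusOnBottom N lab) (hadj : NoSignChange N lab)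
    (hσ : Admissible σ) (hk : IsDoor lab σ k) (hout : vertexLabel lab σ k ∉ plusLabels σ.2) :
    IsRainbow lab σ := by
  rcases hlab : vertexLabel lab σ k with ⟨j, b⟩
  have hj : j ∉ Set.range σ.2 := by
    intro hj
    cases b
    · -- the door carries `(j, true)`, which cannot sit next to `(j, false)`
      obtain ⟨k', -, hk'⟩ := mem_image.1 (hk ▸ mk_true_mem_plusLabels.2 hj)
      simpa [hlab, hk'] using vertexLabel_snd_eq hadj hσ k k' (by rw [hlab, hk'])
    · exact hout (hlab ▸ mk_true_mem_plusLabels.2 hj)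
  cases b
  · exact absurd hlab (vertexLabel_ne_false hbot hσ hj k)
  · exact ⟨j, hj, by rw [← insert_compl_self k, image_insert, hk, hlab]⟩

open Classical in
lemma filter_isDoor_eq_singleton (hk : IsDoor lab σ k)
    (hout : vertexLabel lab σ k ∉ plusLabels σ.2) : univ.filter (IsDoor lab σ) = {k} := by
  ext k'
  simp only [mem_filter, mem_univ, true_and, mem_singleton]
  refine ⟨fun hk' => by_contra fun hne => hout ?_, fun h => h ▸ hk⟩
  rw [← hk']
  exact mem_image_of_mem _ (by simpa [eq_comm] using hne)

open Classical in
lemma exists_filter_isDoor_eq_pair (hk : IsDoor lab σ k)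
    (hin : vertexLabel lab σ k ∈ plusLabels σ.2) :
    ∃ k' ≠ k, univ.filter (IsDoor lab σ) = {k, k'} := by
  rw [← hk] at hin
  obtain ⟨k', hk', hlab⟩ := mem_image.1 hin
  have hne : k' ≠ k := by simpa using hk'
  have hk'door : IsDoor lab σ k' := by
    rw [IsDoor, image_compl_singleton_eq_image_univ hne hlab,
      ← image_compl_singleton_eq_image_univ hne.symm hlab.symm]
    exact hk
  refine ⟨k', hne, ?_⟩
  ext k''
  simp only [mem_filter, mem_univ, true_and, mem_insert, mem_singleton]
  refine ⟨fun hk'' => ?_, by rintro (rfl | rfl) <;> assumption⟩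
  by_contra! h
  -- `k` and `k'` both lie on the door opposite `k''` and carry the same label
  exact hne (hk''.injOn (by simpa [eq_comm] using h.2) (by simpa [eq_comm] using h.1) hlab)

lemma exists_isDoor_of_isRainbow (h : IsRainbow lab σ) :
    ∃ k, IsDoor lab σ k ∧ vertexLabel lab σ k ∉ plusLabels σ.2 := by
  obtain ⟨j, hj, himg⟩ := h
  have hfresh : (j, true) ∉ plusLabels σ.2 := fun h => hj (mk_true_mem_plusLabels.1 h)
  have hinj : Function.Injective (vertexLabel lab σ) := by
    rw [← Set.injOn_univ, ← coe_univ]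
    exact injOn_of_card_image_eq (by rw [himg, card_insert_of_notMem hfresh, card_plusLabels]; simp)
  obtain ⟨k, -, hk⟩ := mem_image.1 (himg ▸ mem_insert_self _ _)
  refine ⟨k, ?_, hk ▸ hfresh⟩
  rw [IsDoor, compl_singleton, image_erase hinj, himg, hk, erase_insert hfresh]

open Classical in
lemma card_filter_isDoor (hbot : NoMinusOnBottom N lab) (hadj : NoSignChange N lab)
    (hσ : Admissible σ) :
    (#(univ.filter (IsDoor lab σ)) : ZMod 2) = if IsRainbow lab σ then 1 else 0 := by
  split_ifs with hR
  · obtain ⟨k, hk, hout⟩ := exists_isDoor_of_isRainbow hR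
    simp [filter_isDoor_eq_singleton hk hout]
  · rcases (univ.filter (IsDoor lab σ)).eq_empty_or_nonempty with he | ⟨k, hk⟩
    · simp [he]
    · have hk := (mem_filter.1 hk).2
      by_cases hin : vertexLabel lab σ k ∈ plusLabels σ.2
      · obtain ⟨k', hne, he⟩ := exists_filter_isDoor_eq_pair hk hin
        rw [he, card_pair hne.symm]
        rfl
      · exact absurd (isRainbow_of_isDoor hbot hadj hσ hk hin) hR

end Counting

section Moves

def raise (σ : KuhnSimplex N n (d + 1)) : KuhnSimplex N n (d + 1) :=
  (Function.update σ.1 (σ.2 0) (σ.1 (σ.2 0) + 1), (finRotate (d + 1)).toEmbedding.trans σ.2)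

def lower (σ : KuhnSimplex N n (d + 1)) : KuhnSimplex N n (d + 1) :=
  (Function.update σ.1 (σ.2 (Fin.last d)) (σ.1 (σ.2 (Fin.last d)) - 1),
    (finRotate (d + 1)).symm.toEmbedding.trans σ.2)

/-- For `0 < k < d + 1`, the transposition of `k - 1` and `k`. -/
def swapIdx (k : Fin (d + 2)) : Equiv.Perm (Fin (d + 1)) :=
  Equiv.swap ⟨k - 1, by omega⟩ ⟨min k d, by omega⟩

def swapAt (σ : KuhnSimplex N n (d + 1)) (k : Fin (d + 2)) : KuhnSimplex N n (d + 1) :=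
  (σ.1, (swapIdx k).toEmbedding.trans σ.2)

def dropLast (σ : KuhnSimplex N n (d + 1)) : KuhnSimplex N n d :=
  (σ.1, Fin.Embedding.init σ.2)

lemma lower_raise (σ : KuhnSimplex N n (d + 1)) : lower (raise σ) = σ := by
  ext1
  · simp [lower, raise]
  · ext l
    simp [lower, raise]

lemma raise_lower (σ : KuhnSimplex N n (d + 1)) : raise (lower σ) = σ := by
  have h0 : (finRotate (d + 1)).symm 0 = Fin.last d := by
    rw [Equiv.symm_apply_eq, finRotate_last]
  ext1
  · simp [lower, raise, h0]
  · ext l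
    simp [lower, raise]

lemma swapAt_swapAt (σ : KuhnSimplex N n (d + 1)) (k : Fin (d + 2)) :
    swapAt (swapAt σ k) k = σ := by
  ext1
  · rfl
  · ext l
    simp [swapAt, swapIdx]

lemma swapAt_ne {σ : KuhnSimplex N n (d + 1)} {k : Fin (d + 2)} (hk0 : k ≠ 0)
    (hkl : k ≠ Fin.last (d + 1)) : swapAt σ k ≠ σ := by
  have hk0 : (k : ℕ) ≠ 0 := fun h => hk0 (Fin.ext h)
  have hkl : (k : ℕ) ≠ d + 1 := fun h => hkl (Fin.ext h)
  intro h
  have h' : σ.2 (swapIdx k ⟨k - 1, by omega⟩) = σ.2 ⟨k - 1, by omega⟩ :=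
    congrArg (fun τ : KuhnSimplex N n (d + 1) => τ.2 ⟨k - 1, by omega⟩) h
  rw [swapIdx, Equiv.swap_apply_left] at h'
  have := congrArg Fin.val (σ.2.injective h')
  simp only at this
  omega

lemma vertex_raise {σ : KuhnSimplex N n (d + 1)} (h : (σ.1 (σ.2 0) : ℕ) < N) {κ : ℕ}
    (hκ : κ ≤ d) : vertex (raise σ) κ = vertex σ (κ + 1) := by
  have hval : ((σ.1 (σ.2 0) + 1 : Fin (N + 1)) : ℕ) = σ.1 (σ.2 0) + 1 :=
    Fin.val_add_one_of_lt (by simpa [Fin.lt_def] using h)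
  funext i
  simp only [vertex, raise]
  rcases eq_or_ne i (σ.2 0) with rfl | hi
  · rw [Function.update_self, hval, steps_eq_one ⟨0, by simp, rfl⟩, steps_eq_zero]
    · push_cast
      ring
    rintro ⟨l, hl, he⟩
    have : l = Fin.last d := (finRotate (d + 1)).injective (by
      rw [finRotate_last]
      exact σ.2.injective he)
    simp [this] at hl
    omega
  · rw [Function.update_of_ne hi]
    congr 1
    refine steps_congr ⟨fun ⟨l, hl, he⟩ => ⟨finRotate _ l, ?_, he⟩, fun ⟨t, ht, he⟩ => ?_⟩
    · rw [coe_finRotate_of_ne_last (by rintro rfl; simp at hl; omega)]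
      omega
    · obtain ⟨l, rfl⟩ := (finRotate (d + 1)).surjective t
      have hl : l ≠ Fin.last d := by
        rintro rfl
        exact hi (by simpa [finRotate_last] using he.symm)
      rw [coe_finRotate_of_ne_last hl] at ht
      exact ⟨l, by omega, he⟩

lemma val_swapIdx_lt_iff {k : Fin (d + 2)} (hk0 : k ≠ 0) (hkl : k ≠ Fin.last (d + 1)) {κ : ℕ}
    (hκ : κ ≠ k) (l : Fin (d + 1)) : (swapIdx k l : ℕ) < κ ↔ (l : ℕ) < κ := by
  have hk0 : (k : ℕ) ≠ 0 := fun h => hk0 (Fin.ext h)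
  have hkl : (k : ℕ) ≠ d + 1 := fun h => hkl (Fin.ext h)
  have hswap : ∀ a b : Fin (d + 1), (a : ℕ) = k - 1 → (b : ℕ) = k →
      (((Equiv.swap a b l : Fin (d + 1)) : ℕ) < κ ↔ (l : ℕ) < κ) := by
    intro a b ha hb
    rcases eq_or_ne l a with rfl | h1
    · rw [Equiv.swap_apply_left]
      omega
    rcases eq_or_ne l b with rfl | h2
    · rw [Equiv.swap_apply_right]
      omega
    rw [Equiv.swap_apply_of_ne_of_ne h1 h2]
  exact hswap _ _ rfl (by simp only; omega)

lemma vertex_swapAt (σ : KuhnSimplex N n (d + 1)) {k : Fin (d + 2)} (hk0 : k ≠ 0)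
    (hkl : k ≠ Fin.last (d + 1)) {κ : ℕ} (hκ : κ ≠ k) : vertex (swapAt σ k) κ = vertex σ κ := by
  funext i
  simp only [vertex, swapAt]
  congr 1
  refine steps_congr ⟨fun ⟨l, hl, he⟩ => ⟨swapIdx k l, ?_, he⟩, fun ⟨l, hl, he⟩ => ?_⟩
  · exact (val_swapIdx_lt_iff hk0 hkl hκ l).2 hl
  · refine ⟨swapIdx k l, (val_swapIdx_lt_iff hk0 hkl hκ l).2 hl, ?_⟩
    simpa [swapIdx] using he

lemma vertex_dropLast (σ : KuhnSimplex N n (d + 1)) {κ : ℕ} (hκ : κ ≤ d) :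
    vertex (dropLast σ) κ = vertex σ κ := by
  funext i
  simp only [vertex, dropLast]
  congr 1
  refine steps_congr ⟨fun ⟨l, hl, he⟩ => ⟨l.castSucc, hl, he⟩, fun ⟨t, ht, he⟩ => ?_⟩
  exact ⟨⟨t, by omega⟩, ht, he⟩

end Moves

section Pivot

lemma Admissible.perm {x : Fin n → Fin (N + 1)} {m : Fin d ↪ Fin n} (hσ : Admissible (x, m))
    (e : Equiv.Perm (Fin d)) : Admissible (x, e.toEmbedding.trans m) := by
  have hrange : Set.range (e.toEmbedding.trans m) = Set.range m := EquivLike.range_comp m e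
  exact ⟨fun i hi => hσ.1 i (hrange ▸ hi), fun l => hσ.2 (e l)⟩

lemma Admissible.update {x : Fin n → Fin (N + 1)} {m : Fin d ↪ Fin n} (hσ : Admissible (x, m))
    {j : Fin n} (hj : j ∈ Set.range m) {v : Fin (N + 1)} (hv : (v : ℕ) < N) :
    Admissible (Function.update x j v, m) := by
  refine ⟨fun i hi => ?_, fun l => ?_⟩
  · have hij : i ≠ j := fun h => hi (h ▸ hj)
    exact (Function.update_of_ne hij _ _).trans (hσ.1 i hi)
  · rcases eq_or_ne (m l) j with h | h
    · simpa [h] using hv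
    · simpa [Function.update_of_ne h] using hσ.2 l

lemma plusLabels_perm (m : Fin d ↪ Fin n) (e : Equiv.Perm (Fin d)) :
    plusLabels (e.toEmbedding.trans m) = plusLabels m := by
  rw [plusLabels, plusLabels, show (fun l => ((e.toEmbedding.trans m) l, true)) =
    (fun l => (m l, true)) ∘ e from rfl, ← image_image, image_univ_equiv]

variable {σ : KuhnSimplex N n (d + 1)}

/-- A door opposite the first vertex carries `(σ.2 0, true)` at a vertex whose `σ.2 0`-th
coordinate is `σ.1 (σ.2 0) + 1`, so that coordinate is not on the top face. -/
lemma val_add_one_lt_of_isDoor_zero (htop : NoPlusOnTop N lab) (hσ : Admissible σ)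
    (hd : IsDoor lab σ 0) : (σ.1 (σ.2 0) : ℕ) + 1 < N := by
  obtain ⟨k, hk, hlab⟩ := mem_image.1 (hd ▸ mk_true_mem_plusLabels.2 ⟨0, rfl⟩ :
    (σ.2 0, true) ∈ ({0}ᶜ : Finset (Fin (d + 2))).image (vertexLabel lab σ))
  have hk : (0 : ℕ) < k := Nat.pos_of_ne_zero fun h => by simp [Fin.ext_iff, h] at hk
  have hcoord : vertex σ k (σ.2 0) = σ.1 (σ.2 0) + 1 := by
    rw [vertex, steps_eq_one ⟨0, hk, rfl⟩]
  have := hσ.2 0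
  by_contra hN
  exact htop _ (vertex_mem_box hσ k) (σ.2 0) (by rw [hcoord]; omega) hlab

lemma Admissible.raise (hσ : Admissible σ) (h : (σ.1 (σ.2 0) : ℕ) + 1 < N) :
    Admissible (raise σ) :=
  (hσ.perm _).update ⟨(finRotate (d + 1)).symm 0, by simp⟩
    (by rwa [Fin.val_add_one_of_lt (by simp [Fin.lt_def]; omega)])

lemma Admissible.lower (hσ : Admissible σ) (h : σ.1 (σ.2 (Fin.last d)) ≠ 0) :
    Admissible (lower σ) :=
  (hσ.perm _).update ⟨finRotate (d + 1) (Fin.last d), congrArg σ.2 (Equiv.symm_apply_apply _ _)⟩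
    (by rw [Fin.val_sub_one_of_ne_zero h]; have := hσ.2 (Fin.last d); omega)

lemma isDoor_raise (h : (σ.1 (σ.2 0) : ℕ) < N) (hd : IsDoor lab σ 0) :
    IsDoor lab (raise σ) (Fin.last (d + 1)) := by
  rw [IsDoor, raise, plusLabels_perm, ← hd]
  refine image_compl_singleton_eq_of_succAbove fun l => ?_
  simp only [vertexLabel, Fin.succAbove_last, Fin.succAbove_zero, Fin.val_castSucc, Fin.val_succ]
  rw [← raise, vertex_raise h l.is_le]

lemma isDoor_lower (h : σ.1 (σ.2 (Fin.last d)) ≠ 0) (hd : IsDoor lab σ (Fin.last (d + 1))) :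
    IsDoor lab (lower σ) 0 := by
  have hlow : ((lower σ).1 ((lower σ).2 0) : ℕ) < N := by
    have h0 : (lower σ).2 0 = σ.2 (Fin.last d) :=
      congrArg σ.2 ((Equiv.symm_apply_eq _).2 finRotate_last.symm)
    have := (σ.1 (σ.2 (Fin.last d))).is_lt
    rw [h0]
    simp only [lower, Function.update_self]
    rw [Fin.val_sub_one_of_ne_zero h]
    omega
  rw [IsDoor, lower, plusLabels_perm, ← hd]
  refine image_compl_singleton_eq_of_succAbove fun l => ?_
  simp only [vertexLabel, Fin.succAbove_last, Fin.succAbove_zero, Fin.val_castSucc, Fin.val_succ]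
  rw [← lower, ← vertex_raise hlow l.is_le, raise_lower]

lemma isDoor_swapAt {k : Fin (d + 2)} (hk0 : k ≠ 0) (hkl : k ≠ Fin.last (d + 1))
    (hd : IsDoor lab σ k) : IsDoor lab (swapAt σ k) k := by
  rw [IsDoor, swapAt, plusLabels_perm, ← hd]
  refine image_compl_singleton_eq_of_succAbove fun l => ?_
  rw [vertexLabel, vertexLabel, ← swapAt,
    vertex_swapAt σ hk0 hkl fun h => Fin.succAbove_ne k l (Fin.ext h)]

end Pivot

section Pairing

open Classical in
noncomputable def doors (N : ℕ) (lab : (Fin n → ℤ) → Fin n × Bool) (d : ℕ) :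
    Finset (KuhnSimplex N n (d + 1) × Fin (d + 2)) :=
  univ.filter fun q => Admissible q.1 ∧ IsDoor lab q.1 q.2

open Classical in
noncomputable def rainbowSimplices (N : ℕ) (lab : (Fin n → ℤ) → Fin n × Bool) (d : ℕ) :
    Finset (KuhnSimplex N n d) :=
  univ.filter fun σ => Admissible σ ∧ IsRainbow lab σ

/-- The facet opposite the last vertex lies in the coordinate face spanned by the other
directions. -/
def IsBoundaryFacet (q : KuhnSimplex N n (d + 1) × Fin (d + 2)) : Prop :=
  q.2 = Fin.last (d + 1) ∧ q.1.1 (q.1.2 (Fin.last d)) = 0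

/-- Sends a door to the same facet seen from the other simplex containing it: the facet opposite
the first (last) vertex is shared with the simplex moved up (down) along its first (last)
direction, any other one with the simplex whose two directions around the removed vertex are
swapped. -/
def pivot (q : KuhnSimplex N n (d + 1) × Fin (d + 2)) : KuhnSimplex N n (d + 1) × Fin (d + 2) :=
  if q.2 = 0 then (raise q.1, Fin.last (d + 1))
  else if q.2 = Fin.last (d + 1) then (lower q.1, 0)
  else (swapAt q.1 q.2, q.2)

lemma pivot_pivot (q : KuhnSimplex N n (d + 1) × Fin (d + 2)) : pivot (pivot q) = q := by
  obtain ⟨σ, k⟩ := q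
  unfold pivot
  split_ifs <;> simp_all [lower_raise, raise_lower, swapAt_swapAt]

lemma pivot_ne (q : KuhnSimplex N n (d + 1) × Fin (d + 2)) : pivot q ≠ q := by
  obtain ⟨σ, k⟩ := q
  simp only [pivot]
  split_ifs with h0 hl
  · exact fun h => Fin.last_pos.ne' (h0 ▸ congrArg Prod.snd h)
  · exact fun h => Fin.last_pos.ne (hl ▸ congrArg Prod.snd h)
  · exact fun h => swapAt_ne h0 hl (congrArg Prod.fst h)

lemma pivot_mem_doors (htop : NoPlusOnTop N lab) {q : KuhnSimplex N n (d + 1) × Fin (d + 2)}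
    (hq : q ∈ doors N lab d) (hb : ¬ IsBoundaryFacet q) :
    pivot q ∈ doors N lab d ∧ ¬ IsBoundaryFacet (pivot q) := by
  obtain ⟨σ, k⟩ := q
  simp only [doors, mem_filter, mem_univ, true_and] at hq ⊢
  obtain ⟨hσ, hd⟩ := hq
  simp only [pivot]
  split_ifs with h0 hl
  · subst h0
    have hlt := val_add_one_lt_of_isDoor_zero htop hσ hd
    have hval : ((raise σ).1 ((raise σ).2 (Fin.last d)) : ℕ) = σ.1 (σ.2 0) + 1 := by
      simp only [raise, Function.Embedding.trans_apply, Equiv.coe_toEmbedding, finRotate_last,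
        Function.update_self]
      exact Fin.val_add_one_of_lt (by simp [Fin.lt_def]; omega)
    refine ⟨⟨hσ.raise hlt, isDoor_raise (by omega) hd⟩, fun h => ?_⟩
    have := congrArg Fin.val h.2
    simp [hval] at this
  · subst hl
    have hne : σ.1 (σ.2 (Fin.last d)) ≠ 0 := fun h => hb ⟨rfl, h⟩
    exact ⟨⟨hσ.lower hne, isDoor_lower hne hd⟩, fun h => Fin.last_pos.ne h.1⟩
  · exact ⟨⟨hσ.perm (swapIdx k), isDoor_swapAt h0 hl hd⟩, fun h => hl h.1⟩

open Classical in
lemma card_filter_not_isBoundaryFacet (htop : NoPlusOnTop N lab) :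
    (#((doors N lab d).filter fun q => ¬ IsBoundaryFacet q) : ZMod 2) = 0 := by
  rw [card_eq_sum_ones, Nat.cast_sum]
  refine sum_involution (fun q _ => pivot q) (fun _ _ => by decide) (fun q _ _ => pivot_ne q)
    (fun q hq => ?_) (fun q _ => pivot_pivot q)
  have hq := mem_filter.1 hq
  exact mem_filter.2 (pivot_mem_doors htop hq.1 hq.2)

end Pairing

section Boundary

lemma last_notMem_range_init (m : Fin (d + 1) ↪ Fin n) :
    m (Fin.last d) ∉ Set.range (Fin.Embedding.init m) :=
  fun ⟨l, hl⟩ => (Fin.castSucc_lt_last l).ne (m.injective hl)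

lemma plusLabels_eq_insert (m : Fin (d + 1) ↪ Fin n) :
    plusLabels m = insert (m (Fin.last d), true) (plusLabels (Fin.Embedding.init m)) := by
  rw [plusLabels, ← insert_compl_self (Fin.last d), image_insert, ← Fin.image_castSucc,
    image_image]
  rfl

variable {σ σ' : KuhnSimplex N n (d + 1)}

lemma Admissible.dropLast (hσ : Admissible σ) (h0 : σ.1 (σ.2 (Fin.last d)) = 0) :
    Admissible (dropLast σ) := by
  refine ⟨fun i hi => ?_, fun l => hσ.2 l.castSucc⟩
  by_cases hir : i ∈ Set.range σ.2
  · obtain ⟨l, rfl⟩ := hir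
    induction l using Fin.lastCases with
    | last => exact h0
    | cast l => exact absurd ⟨l, rfl⟩ hi
  · exact hσ.1 i hir

lemma Admissible.snoc {τ : KuhnSimplex N n d} (hτ : Admissible τ) {j : Fin n}
    (hj : j ∉ Set.range τ.2) (hN : 1 ≤ N) : Admissible (τ.1, Fin.Embedding.snoc τ.2 hj) := by
  refine ⟨fun i hi => hτ.1 i fun ⟨l, hl⟩ => hi ⟨l.castSucc, by simpa using hl⟩, fun l => ?_⟩
  induction l using Fin.lastCases with
  | last => simp only [Fin.Embedding.snoc_last, hτ.1 j hj, Fin.val_zero]; omega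
  | cast l => simpa using hτ.2 l

lemma image_vertexLabel_dropLast (σ : KuhnSimplex N n (d + 1)) :
    univ.image (vertexLabel lab (dropLast σ)) =
      ({Fin.last (d + 1)}ᶜ : Finset (Fin (d + 2))).image (vertexLabel lab σ) := by
  rw [← Fin.image_castSucc, image_image]
  refine congrArg (image · univ) (funext fun k => ?_)
  simp only [vertexLabel, Function.comp_apply, Fin.val_castSucc, vertex_dropLast σ k.is_le]

lemma isDoor_last_iff :
    IsDoor lab σ (Fin.last (d + 1)) ↔ univ.image (vertexLabel lab (dropLast σ)) =
      insert (σ.2 (Fin.last d), true) (plusLabels (dropLast σ).2) := by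
  rw [image_vertexLabel_dropLast, IsDoor, plusLabels_eq_insert]
  rfl

lemma eq_of_dropLast_eq (h : dropLast σ = dropLast σ') (hl : σ.2 (Fin.last d) = σ'.2 (Fin.last d)) :
    σ = σ' := by
  refine Prod.ext (congrArg (fun τ : KuhnSimplex N n d => τ.1) h) (DFunLike.ext _ _ fun l => ?_)
  induction l using Fin.lastCases with
  | last => exact hl
  | cast l => exact DFunLike.congr_fun (congrArg Prod.snd h) l

lemma eq_of_isDoor_last_of_dropLast_eq (hd : IsDoor lab σ (Fin.last (d + 1)))
    (hd' : IsDoor lab σ' (Fin.last (d + 1))) (h : dropLast σ = dropLast σ') : σ = σ' := by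
  have e := isDoor_last_iff.1 hd
  rw [h] at e
  have hfresh : (σ'.2 (Fin.last d), true) ∉ plusLabels (dropLast σ').2 :=
    fun hj => last_notMem_range_init σ'.2 (mk_true_mem_plusLabels.1 hj)
  have hl := (insert_inj hfresh).1 ((isDoor_last_iff.1 hd').symm.trans e)
  exact eq_of_dropLast_eq h (congrArg Prod.fst hl).symm

open Classical in
lemma card_filter_isBoundaryFacet (hN : 1 ≤ N) :
    #((doors N lab d).filter IsBoundaryFacet) = #(rainbowSimplices N lab d) := by
  simp only [doors, rainbowSimplices, filter_filter]
  refine card_bij (fun q _ => dropLast q.1) ?_ ?_ ?_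
  · rintro ⟨σ, k⟩ hq
    obtain ⟨⟨hσ, hd⟩, rfl, h0⟩ := (mem_filter.1 hq).2
    exact mem_filter.2 ⟨mem_univ _, hσ.dropLast h0, _, last_notMem_range_init σ.2,
      isDoor_last_iff.1 hd⟩
  · rintro ⟨σ, k⟩ hq ⟨σ', k'⟩ hq' h
    obtain ⟨⟨-, hd⟩, rfl, -⟩ := (mem_filter.1 hq).2
    obtain ⟨⟨-, hd'⟩, rfl, -⟩ := (mem_filter.1 hq').2
    exact congrArg (·, _) (eq_of_isDoor_last_of_dropLast_eq hd hd' h)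
  · intro τ hτ
    obtain ⟨hτ, j, hj, himg⟩ := (mem_filter.1 hτ).2
    have hdrop : dropLast (τ.1, Fin.Embedding.snoc τ.2 hj) = τ :=
      Prod.ext rfl (Fin.Embedding.init_snoc τ.2 hj)
    refine ⟨((τ.1, Fin.Embedding.snoc τ.2 hj), Fin.last (d + 1)), mem_filter.2 ⟨mem_univ _,
      ⟨hτ.snoc hj hN, isDoor_last_iff.2 ?_⟩, rfl, ?_⟩, hdrop⟩
    · rw [hdrop, himg, Fin.Embedding.snoc_last]
    · simpa using hτ.1 j hj

end Boundary

section Parity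

lemma card_doors_eq_card_rainbowSimplices_succ (hbot : NoMinusOnBottom N lab)
    (hadj : NoSignChange N lab) (d : ℕ) :
    (#(doors N lab d) : ZMod 2) = #(rainbowSimplices N lab (d + 1)) := by
  classical
  rw [doors, rainbowSimplices, card_filter, card_filter, Nat.cast_sum, Nat.cast_sum,
    Fintype.sum_prod_type]
  refine sum_congr rfl fun σ _ => ?_
  by_cases hσ : Admissible σ
  · have := card_filter_isDoor hbot hadj hσ
    rw [card_filter, Nat.cast_sum] at this
    simp only [hσ, true_and]
    rw [this]
    split_ifs <;> simp
  · simp [hσ]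

lemma card_doors_eq_card_rainbowSimplices (hN : 1 ≤ N) (htop : NoPlusOnTop N lab) (d : ℕ) :
    (#(doors N lab d) : ZMod 2) = #(rainbowSimplices N lab d) := by
  classical
  rw [← card_filter_add_card_filter_not IsBoundaryFacet, Nat.cast_add,
    card_filter_not_isBoundaryFacet htop, add_zero, card_filter_isBoundaryFacet hN]

lemma card_rainbowSimplices_zero (hbot : NoMinusOnBottom N lab) :
    #(rainbowSimplices N lab 0) = 1 := by
  set σ₀ : KuhnSimplex N n 0 := (0, Function.Embedding.ofIsEmpty)
  have hσ₀ : Admissible σ₀ := ⟨fun _ _ => rfl, fun l => l.elim0⟩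
  have hvertex : vertex σ₀ 0 = 0 := by
    ext i
    simp [σ₀, vertex, steps_eq_zero_of_notMem_range (m := σ₀.2) (by simp)]
  rcases hlab : lab 0 with ⟨j, b⟩
  cases b
  · exact absurd hlab (hbot 0 (fun i => by simp) j rfl)
  rw [card_eq_one]
  refine ⟨σ₀, ?_⟩
  ext σ
  simp only [rainbowSimplices, mem_filter, mem_univ, true_and, mem_singleton]
  refine ⟨fun h => Prod.ext (funext fun i => h.1.1 i (by simp))
    (DFunLike.ext _ _ fun l => l.elim0), ?_⟩
  rintro rfl
  refine ⟨hσ₀, j, by simp, ?_⟩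
  rw [show (univ : Finset (Fin (0 + 1))) = {0} from rfl, image_singleton, vertexLabel,
    Fin.val_zero, hvertex, hlab]
  simp [plusLabels]

lemma rainbowSimplices_eq_empty : rainbowSimplices N lab n = ∅ := by
  simp only [rainbowSimplices, filter_eq_empty_iff]
  rintro σ - ⟨-, j, hj, -⟩
  exact hj <| (Finite.injective_iff_surjective.1 σ.2.injective) j

end Parity

/-- The discrete Poincaré–Miranda theorem. -/
theorem exists_adjacent_opposite_labels (hN : 1 ≤ N) (lab : (Fin n → ℤ) → Fin n × Bool)
    (hbot : NoMinusOnBottom N lab) (htop : NoPlusOnTop N lab) :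
    ∃ u ∈ box N, ∃ v ∈ box N, u ≤ v ∧ v ≤ u + 1 ∧ (lab u).1 = (lab v).1 ∧
      (lab u).2 ≠ (lab v).2 := by
  by_contra! hadj
  have hodd : ∀ d, (#(rainbowSimplices N lab d) : ZMod 2) = 1 := by
    intro d
    induction d with
    | zero => simp [card_rainbowSimplices_zero hbot]
    | succ d ih =>
      rw [← card_doors_eq_card_rainbowSimplices_succ hbot hadj,
        card_doors_eq_card_rainbowSimplices hN htop, ih]
  simpa [rainbowSimplices_eq_empty] using hodd n

end DiscretePoincareMiranda

open DiscretePoincareMiranda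

/-- An `n`-dimensional Hex theorem. -/
theorem exists_scaleChain_across_box {X : Type*} [PseudoMetricSpace X] {n N : ℕ} (hN : 1 ≤ N)
    (g : (Fin n → ℤ) → X) {s : ℝ}
    (hg : ∀ u ∈ box N, ∀ v ∈ box N, u ≤ v → v ≤ u + 1 → dist (g u) (g v) < s)
    (U : Fin n → Set X) (hU : ∀ x, ∃ i, x ∈ U i) :
    ∃ i, ∃ v ∈ box N, ∃ w ∈ box N, v i = 0 ∧ w i = N ∧ ScaleChain dist s (U i) (g v) (g w) := by
  classical
  choose χ hχ using fun v => hU (g v)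
  let Reach : (Fin n → ℤ) → Prop := fun v =>
    ∃ w ∈ box N, w (χ v) = N ∧ ScaleChain dist s (U (χ v)) (g v) (g w)
  have reach_of_reach : ∀ a b, χ a = χ b → dist (g a) (g b) < s → Reach b → Reach a := by
    rintro a b hab hd ⟨w, hw, hwN, hc⟩
    exact ⟨w, hw, hab ▸ hwN, ScaleChain.cons (hχ a) hd (by rwa [hab])⟩
  by_contra! hno
  let lab : (Fin n → ℤ) → Fin n × Bool := fun v => (χ v, !decide (Reach v))
  have hbot : NoMinusOnBottom N lab := by
    rintro v hv i hvi hlab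
    simp only [lab, Prod.mk.injEq, Bool.not_eq_false', decide_eq_true_eq] at hlab
    obtain ⟨rfl, w, hw, hwi, hc⟩ := hlab
    exact hno _ v hv w hw hvi hwi hc
  have htop : NoPlusOnTop N lab := by
    rintro v hv i hvi hlab
    simp only [lab, Prod.mk.injEq, Bool.not_eq_true', decide_eq_false_iff_not] at hlab
    obtain ⟨rfl, hlab⟩ := hlab
    exact hlab ⟨v, hv, hvi, ScaleChain.refl _ _ (hχ v)⟩
  obtain ⟨u, hu, v, hv, huv, hvu, hχuv, hReach⟩ := exists_adjacent_opposite_labels hN lab hbot htop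
  refine hReach (congrArg (fun b => !decide b) (propext ⟨fun h => ?_, fun h => ?_⟩))
  · exact reach_of_reach v u hχuv.symm (dist_comm (g u) (g v) ▸ hg u hu v hv huv hvu) h
  · exact reach_of_reach u v hχuv (hg u hu v hv huv hvu) h

lemma sum_abs_le_of_mem_box {n N : ℕ} {v : Fin n → ℤ} (hv : v ∈ box N) :
    ∑ i, |v i| ≤ n * N := by
  calc ∑ i, |v i| ≤ ∑ _i : Fin n, (N : ℤ) :=
        sum_le_sum fun i _ => (abs_of_nonneg (hv i).1).trans_le (hv i).2
    _ = n * N := by simp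

lemma sum_abs_sub_le_of_le_of_le_add_one {n : ℕ} {u v : Fin n → ℤ} (h : u ≤ v) (h' : v ≤ u + 1) :
    ∑ i, |u i - v i| ≤ n := by
  calc ∑ i, |u i - v i| ≤ ∑ _i : Fin n, (1 : ℤ) := sum_le_sum fun i _ => by
        have := h' i
        simp only [Pi.add_apply, Pi.one_apply] at this
        rw [abs_le]
        constructor <;> linarith [h i]
    _ = n := by simp

section Dilatation

variable {X : Type*} [PseudoMetricSpace X] {n N : ℕ} {g : (Fin n → ℤ) → X} {c : ℝ}

theorem exists_long_scaleChain_of_dilatation (hN : 1 ≤ N) (hc : 0 < c)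
    (hg : ∀ u ∈ box N, ∀ v ∈ box N, dist (g u) (g v) = c * ((∑ i, |u i - v i| : ℤ) : ℝ))
    (U : Fin n → Set X) (hU : ∀ x, ∃ i, x ∈ U i) :
    ∃ i x y, ScaleChain dist (c * (n + 1)) (U i) x y ∧ c * N ≤ dist x y := by
  have hstep : ∀ u ∈ box N, ∀ v ∈ box N, u ≤ v → v ≤ u + 1 → dist (g u) (g v) < c * (n + 1) := by
    intro u hu v hv h h'
    have : ((∑ i, |u i - v i| : ℤ) : ℝ) ≤ n := by
      exact_mod_cast sum_abs_sub_le_of_le_of_le_add_one h h'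
    rw [hg u hu v hv]
    exact (mul_le_mul_of_nonneg_left this hc.le).trans_lt (mul_lt_mul_of_pos_left (lt_add_one _) hc)
  obtain ⟨i, v, hv, w, hw, hvi, hwi, hchain⟩ := exists_scaleChain_across_box hN g hstep U hU
  refine ⟨i, g v, g w, hchain, ?_⟩
  have hlong := single_le_sum (fun j _ => abs_nonneg (v j - w j)) (mem_univ i)
  rw [hvi, hwi, zero_sub, abs_neg, Nat.abs_cast] at hlong
  rw [hg v hv w hw]
  gcongr
  exact_mod_cast hlong

end Dilatation

/-- A sequence of dilatations of `ℓ¹`-balls of `ℤⁿ` of radii tending to infinity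
into `X` forces `asdim_AN X ≥ n`, i.e. `asdim_AN X ≤ n - 1` fails. -/
theorem asdimAN_ge_of_dilatations {X : Type*} [MetricSpace X] (n : ℕ) (hn : 1 ≤ n)
    (kseq : ℕ → ℕ) (hk : Filter.Tendsto kseq Filter.atTop Filter.atTop)
    (f : ℕ → (Fin n → ℤ) → X) (C : ℕ → ℝ) (hC : ∀ m, 1 ≤ C m)
    (hdil : ∀ m, ∀ x y : Fin n → ℤ,
      (∑ i, |x i|) ≤ (kseq m : ℤ) → (∑ i, |y i|) ≤ (kseq m : ℤ) →
      dist (f m x) (f m y) = C m * ((∑ i, |x i - y i| : ℤ) : ℝ)) :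
    ¬ ASDimANLe (dist : X → X → ℝ) (n - 1) := by
  rintro ⟨C', hC', k, hcov⟩
  rw [Nat.sub_add_cancel hn] at hcov
  obtain ⟨N, hN⟩ := exists_nat_gt (C' * (n + 1) + max k 0)
  have hN1 : 1 ≤ N := by exact_mod_cast (by positivity : (0 : ℝ) ≤ _).trans_lt hN
  obtain ⟨M, hM⟩ := (hk.eventually_ge_atTop (n * N)).exists
  have hbox : ∀ v ∈ box N, ∑ i, |v i| ≤ (kseq M : ℤ) := fun v hv =>
    (sum_abs_le_of_mem_box hv).trans (by exact_mod_cast hM)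
  obtain ⟨U, hU, hbdd⟩ := hcov (C M * (n + 1)) (by nlinarith [hC M])
  obtain ⟨i, x, y, hchain, hlong⟩ := exists_long_scaleChain_of_dilatation hN1
    (one_pos.trans_le (hC M)) (fun u hu v hv => hdil M u v (hbox u hu) (hbox v hv)) U hU
  nlinarith [hbdd i x y hchain, le_max_left k 0, le_max_right k 0, hC M]
end

section
/- Let G be a finitely generated group whose center contains an element of infinite order, and let d_G be a proper left-invariant metric on G. Then for all k, m, R ∈ ℕ there exists a proper left-invariant metric d_ω on G with associated norm ‖·‖_ω such that: (1) ‖g‖_ω ≤ ‖g‖_G for all g; (2) ‖g‖_G = ‖g‖_ω whenever ‖g‖_ω ≤ R; (3) there is a group homomorphism f : ℤᵐ → G whose restriction to the ℓ¹-ball B(0,k) ⊂ ℤᵐ is a dilatation into (G,d_ω). -/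
/-!
Push the `ℓ¹`-norm of `ℤᵐ`, scaled by `C = R + 1`, into `G` along a homomorphism
`f : ℤᵐ → ⟨z ^ t⟩ ≤ Z(G)` and set `‖g‖_ω = inf_u (C ‖u‖₁ + ‖f(u)⁻¹ g‖_G)`; since `f` is central this
is again a norm, and it is proper because both ingredients are. Every `u ≠ 0` costs at least
`C > R`, so `‖·‖_ω` agrees with `‖·‖_G` below `R`. Reading `u` in base `4k + 1` makes `f`
injective on the `2k`-ball, and taking `t` large puts distinct images of that ball `‖·‖_G`-far
apart, so on the `k`-ball the infimum is attained by `u` itself and `f` is a `C`-dilatation.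
-/

def IsProperLeftInvMetric {G : Type*} [Group G] (d : G → G → ℝ) : Prop :=
  (∀ x y, d x y = 0 ↔ x = y) ∧
  (∀ x y, d x y = d y x) ∧
  (∀ x y z, d x z ≤ d x y + d y z) ∧
  (∀ g x y, d (g * x) (g * y) = d x y) ∧
  (∀ K : ℝ, {g : G | d 1 g ≤ K}.Finite)

namespace IsProperLeftInvMetric

variable {G : Type*} [Group G] {d : G → G → ℝ}

theorem apply_eq_apply_one_inv_mul (hd : IsProperLeftInvMetric d) (x y : G) :
    d x y = d 1 (x⁻¹ * y) := by
  rw [← hd.2.2.2.1 x⁻¹, inv_mul_cancel]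

def groupSeminorm (hd : IsProperLeftInvMetric d) : GroupSeminorm G where
  toFun g := d 1 g
  map_one' := (hd.1 1 1).2 rfl
  mul_le' a b := by
    rw [← inv_mul_cancel_left a b, ← hd.apply_eq_apply_one_inv_mul, inv_mul_cancel_left]
    exact hd.2.2.1 1 a (a * b)
  inv' g := by
    rw [hd.2.1, hd.apply_eq_apply_one_inv_mul, inv_inv, mul_one]

end IsProperLeftInvMetric

theorem GroupSeminorm.isProperLeftInvMetric {G : Type*} [Group G] (N : GroupSeminorm G)
    (hN₀ : ∀ g, N g = 0 → g = 1) (hN : ∀ K : ℝ, {g | N g ≤ K}.Finite) :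
    IsProperLeftInvMetric fun x y => N (x⁻¹ * y) := by
  refine ⟨fun x y => ⟨fun h => inv_mul_eq_one.1 (hN₀ _ h), ?_⟩, fun x y => ?_, fun x y z => ?_,
    fun g x y => by simp [mul_assoc], fun K => by simpa using hN K⟩
  · rintro rfl
    simp
  · show N (x⁻¹ * y) = N (y⁻¹ * x)
    rw [← map_inv_eq_map N, mul_inv_rev, inv_inv]
  · simpa [mul_assoc] using map_mul_le_add N (x⁻¹ * y) (y⁻¹ * z)

namespace GroupSeminorm

variable {G A : Type*} [Group G] [AddGroup A] (N : GroupSeminorm G) (ℓ : AddGroupSeminorm A)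
  (φ : Multiplicative A →* G) (hφ : ∀ a, φ a ∈ Subgroup.center G)

private theorem iInf_le_add_map (g : G) (a : A) :
    ⨅ b : A, ℓ b + N ((φ (.ofAdd b))⁻¹ * g) ≤ ℓ a + N ((φ (.ofAdd a))⁻¹ * g) :=
  ciInf_le ⟨0, Set.forall_mem_range.2 fun _ => by positivity⟩ a

/-- The largest seminorm on `G` bounded by `N` and by `ℓ` along `φ`. -/
noncomputable def centralInfConv : GroupSeminorm G where
  toFun g := ⨅ a : A, ℓ a + N ((φ (.ofAdd a))⁻¹ * g)
  map_one' := by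
    refine le_antisymm ?_ (Real.iInf_nonneg fun a => by positivity)
    simpa using iInf_le_add_map N ℓ φ 1 0
  mul_le' g h := by
    refine le_ciInf_add_ciInf fun a b => ?_
    have hcomm := Subgroup.mem_center_iff.1 (inv_mem (hφ (.ofAdd b))) ((φ (.ofAdd a))⁻¹ * g)
    have hsplit : (φ (.ofAdd (a + b)))⁻¹ * (g * h) =
        (φ (.ofAdd a))⁻¹ * g * ((φ (.ofAdd b))⁻¹ * h) := by
      rw [ofAdd_add, map_mul, mul_inv_rev, ← mul_assoc, mul_assoc _ _ g, ← hcomm, mul_assoc]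
    calc _ ≤ ℓ (a + b) + N ((φ (.ofAdd (a + b)))⁻¹ * (g * h)) := iInf_le_add_map N ℓ φ _ _
      _ ≤ ℓ a + ℓ b + (N ((φ (.ofAdd a))⁻¹ * g) + N ((φ (.ofAdd b))⁻¹ * h)) := by
        rw [hsplit]
        exact add_le_add (map_add_le_add ℓ a b) (map_mul_le_add N _ _)
      _ = _ := by ring
  inv' g := by
    have key : ∀ g : G, ⨅ a : A, ℓ a + N ((φ (.ofAdd a))⁻¹ * g⁻¹) ≤
        ⨅ a : A, ℓ a + N ((φ (.ofAdd a))⁻¹ * g) := fun g => le_ciInf fun a => by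
      have hcomm := Subgroup.mem_center_iff.1 (hφ (.ofAdd a)) g⁻¹
      calc _ ≤ ℓ (-a) + N ((φ (.ofAdd (-a)))⁻¹ * g⁻¹) := iInf_le_add_map N ℓ φ _ _
        _ = ℓ a + N ((φ (.ofAdd a))⁻¹ * g) := by
          rw [map_neg_eq_map, ← map_inv_eq_map N ((φ (.ofAdd a))⁻¹ * g), ofAdd_neg, map_inv,
            inv_inv, mul_inv_rev, inv_inv, hcomm]
    exact le_antisymm (key g) (by simpa using key g⁻¹)

variable {N ℓ φ hφ}

theorem centralInfConv_le_add (g : G) (a : A) :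
    centralInfConv N ℓ φ hφ g ≤ ℓ a + N ((φ (.ofAdd a))⁻¹ * g) :=
  iInf_le_add_map N ℓ φ g a

theorem le_centralInfConv {g : G} {c : ℝ} (h : ∀ a, c ≤ ℓ a + N ((φ (.ofAdd a))⁻¹ * g)) :
    c ≤ centralInfConv N ℓ φ hφ g :=
  le_ciInf h

theorem centralInfConv_le (g : G) : centralInfConv N ℓ φ hφ g ≤ N g := by
  simpa using centralInfConv_le_add (hφ := hφ) g 0

theorem centralInfConv_map_le (a : A) : centralInfConv N ℓ φ hφ (φ (.ofAdd a)) ≤ ℓ a := by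
  simpa using centralInfConv_le_add (hφ := hφ) (φ (.ofAdd a)) a

theorem centralInfConv_eq_of_lt {c : ℝ} (hc : ∀ a ≠ 0, c ≤ ℓ a) {g : G}
    (hg : centralInfConv N ℓ φ hφ g < c) : centralInfConv N ℓ φ hφ g = N g := by
  have hmin : min (N g) c ≤ centralInfConv N ℓ φ hφ g := le_centralInfConv fun a => by
    obtain rfl | ha := eq_or_ne a 0
    · simp
    · exact (min_le_right _ _).trans <| (hc a ha).trans <| le_add_of_nonneg_right (apply_nonneg _ _)
  rcases min_le_iff.1 hmin with h | h
  · exact le_antisymm (centralInfConv_le g) h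
  · exact absurd hg h.not_gt

theorem centralInfConv_map_eq {a₀ : A}
    (h : ∀ a, ℓ a < ℓ a₀ → ℓ a₀ ≤ N ((φ (.ofAdd a))⁻¹ * φ (.ofAdd a₀))) :
    centralInfConv N ℓ φ hφ (φ (.ofAdd a₀)) = ℓ a₀ := by
  refine le_antisymm (centralInfConv_map_le a₀) (le_centralInfConv fun a => ?_)
  obtain hle | hlt := le_or_gt (ℓ a₀) (ℓ a)
  · exact hle.trans <| le_add_of_nonneg_right (apply_nonneg _ _)
  · exact (h a hlt).trans <| le_add_of_nonneg_left (apply_nonneg _ _)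

theorem finite_centralInfConv_le (hℓ : ∀ K : ℝ, {a | ℓ a ≤ K}.Finite)
    (hN : ∀ K : ℝ, {g | N g ≤ K}.Finite) (K : ℝ) :
    {g | centralInfConv N ℓ φ hφ g ≤ K}.Finite := by
  refine (((hℓ (K + 1)).prod (hN (K + 1))).image fun p => φ (.ofAdd p.1) * p.2).subset ?_
  intro g hg
  obtain ⟨a, ha⟩ := exists_lt_of_ciInf_lt (lt_of_le_of_lt hg (lt_add_one K))
  have hℓa := apply_nonneg ℓ a
  have hNa := apply_nonneg N ((φ (.ofAdd a))⁻¹ * g)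
  exact ⟨(a, (φ (.ofAdd a))⁻¹ * g), ⟨show ℓ a ≤ K + 1 by linarith,
    show N _ ≤ K + 1 by linarith⟩, mul_inv_cancel_left _ _⟩

end GroupSeminorm

theorem abs_apply_le_sum_abs {ι α : Type*} [Fintype ι] [AddCommGroup α] [LinearOrder α]
    [IsOrderedAddMonoid α] (u : ι → α) (i : ι) : |u i| ≤ ∑ j, |u j| :=
  Finset.single_le_sum (fun j _ => abs_nonneg (u j)) (Finset.mem_univ i)

def l1Seminorm (ι : Type*) [Fintype ι] : AddGroupSeminorm (ι → ℤ) where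
  toFun u := ((∑ i, |u i| : ℤ) : ℝ)
  map_zero' := by simp
  add_le' u v := by
    exact_mod_cast (Finset.sum_le_sum fun i _ => abs_add_le (u i) (v i)).trans_eq
      Finset.sum_add_distrib
  neg' u := by simp

namespace l1Seminorm

variable {ι : Type*} [Fintype ι]

theorem nsmul_apply (c : ℕ) (u : ι → ℤ) : (c • l1Seminorm ι) u = c * ((∑ i, |u i| : ℤ) : ℝ) :=
  nsmul_eq_mul _ _

theorem le_nsmul_apply (c : ℕ) {u : ι → ℤ} (hu : u ≠ 0) : (c : ℝ) ≤ (c • l1Seminorm ι) u := by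
  obtain ⟨i, hi⟩ := Function.ne_iff.1 hu
  have : (1 : ℝ) ≤ ((∑ j, |u j| : ℤ) : ℝ) :=
    mod_cast (Int.one_le_abs hi).trans (abs_apply_le_sum_abs u i)
  rw [nsmul_apply]
  exact le_mul_of_one_le_right c.cast_nonneg this

theorem finite_nsmul_le [DecidableEq ι] {c : ℕ} (hc : c ≠ 0) (K : ℝ) :
    {u | (c • l1Seminorm ι) u ≤ K}.Finite := by
  refine (Set.finite_Icc (-fun _ => (⌈K⌉₊ : ℤ)) fun _ => (⌈K⌉₊ : ℤ)).subset fun u hu => ?_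
  have hK : ((∑ j, |u j| : ℤ) : ℝ) ≤ ⌈K⌉₊ := by
    have hc : (1 : ℝ) ≤ c := mod_cast Nat.one_le_iff_ne_zero.2 hc
    have hu : c * ((∑ j, |u j| : ℤ) : ℝ) ≤ K := (nsmul_apply c u).symm.trans_le hu
    have : (0 : ℝ) ≤ ((∑ j, |u j| : ℤ) : ℝ) := mod_cast Finset.sum_nonneg fun j _ => abs_nonneg _
    nlinarith [Nat.le_ceil K]
  have hu' := fun i => abs_le.1 ((abs_apply_le_sum_abs u i).trans (mod_cast hK))
  exact ⟨fun i => (hu' i).1, fun i => (hu' i).2⟩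

end l1Seminorm

def radixHom (M : ℤ) (m : ℕ) : (Fin m → ℤ) →+ ℤ where
  toFun u := ∑ i, u i * M ^ (i : ℕ)
  map_zero' := by simp
  map_add' u v := by simp [add_mul, Finset.sum_add_distrib]

theorem radixHom_succ (M : ℤ) {m : ℕ} (w : Fin (m + 1) → ℤ) :
    radixHom M (m + 1) w = w 0 + M * radixHom M m (Fin.tail w) := by
  simp [radixHom, Fin.sum_univ_succ, pow_succ, Finset.mul_sum, Fin.tail, mul_comm, mul_left_comm]

theorem eq_zero_of_radixHom_eq_zero {M : ℤ} :
    ∀ {m : ℕ} {w : Fin m → ℤ}, (∀ i, |w i| < M) → radixHom M m w = 0 → w = 0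
  | 0, _, _, _ => Subsingleton.elim _ _
  | m + 1, w, hw, h => by
    rw [radixHom_succ] at h
    have h₀ : w 0 = 0 :=
      Int.eq_zero_of_abs_lt_dvd ⟨-radixHom M m (Fin.tail w), by linarith⟩ (hw 0)
    have hM : M ≠ 0 := ((abs_nonneg _).trans_lt (hw 0)).ne'
    have htail : Fin.tail w = 0 := eq_zero_of_radixHom_eq_zero (fun i => hw i.succ)
      (by simpa [h₀, hM] using h)
    rw [← Fin.cons_self_tail w, h₀, htail]
    exact Matrix.cons_zero_zero

theorem radixHom_injOn {M : ℤ} {m : ℕ} {u v : Fin m → ℤ} (huv : ∑ i, |u i| + ∑ i, |v i| < M)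
    (h : radixHom M m u = radixHom M m v) : u = v := by
  refine sub_eq_zero.1 (eq_zero_of_radixHom_eq_zero (fun i => ?_) (by rw [map_sub, h, sub_self]))
  calc |(u - v) i| ≤ |u i| + |v i| := abs_sub (u i) (v i)
    _ < M := lt_of_le_of_lt (add_le_add (abs_apply_le_sum_abs u i)
      (abs_apply_le_sum_abs v i)) huv

theorem exists_pow_lt_apply_zpow {G : Type*} [Group G] {N : G → ℝ}
    (hN : ∀ K : ℝ, {g | N g ≤ K}.Finite) {z : G} (hz : ¬IsOfFinOrder z) (B : ℝ) :
    ∃ t : ℕ, ∀ j : ℤ, j ≠ 0 → B < N ((z ^ t) ^ j) := by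
  have hfin : {j : ℤ | N (z ^ j) ≤ B}.Finite :=
    (hN B).preimage (injective_zpow_iff_not_isOfFinOrder.2 hz).injOn
  obtain ⟨T, hT⟩ := (hfin.image Int.natAbs).bddAbove
  refine ⟨T + 1, fun j hj => lt_of_not_ge fun hle => ?_⟩
  rw [← zpow_natCast, ← zpow_mul] at hle
  have := hT ⟨_, hle, rfl⟩
  have hj' : 1 ≤ j.natAbs := Int.natAbs_pos.2 hj
  rw [Int.natAbs_mul] at this
  change (T + 1) * j.natAbs ≤ T at this
  nlinarith

section RadixEmbedding

variable {G : Type*} [Group G] {w : G}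

def radixZpowersHom (w : G) (k m : ℕ) : Multiplicative (Fin m → ℤ) →* G :=
  (zpowersHom G w).comp (radixHom (4 * k + 1) m).toMultiplicative

theorem radixZpowersHom_mem_center (hw : w ∈ Subgroup.center G) (k m : ℕ)
    (a : Multiplicative (Fin m → ℤ)) : radixZpowersHom w k m a ∈ Subgroup.center G :=
  zpow_mem hw _

/-- Base `4k + 1` makes the embedding injective on the `2k`-ball, and the `N`-distance
between distinct images of that ball exceeds `2kc`, so the infimum is attained at `a = y - x`. -/
theorem centralInfConv_radixZpowersHom {N : GroupSeminorm G} (hw : w ∈ Subgroup.center G)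
    {k m c : ℕ} (hfar : ∀ j : ℤ, j ≠ 0 → 2 * k * c < N (w ^ j)) {x y : Fin m → ℤ}
    (hx : ∑ i, |x i| ≤ k) (hy : ∑ i, |y i| ≤ k) :
    N.centralInfConv (c • l1Seminorm (Fin m)) (radixZpowersHom w k m)
        (radixZpowersHom_mem_center hw k m)
        ((radixZpowersHom w k m (.ofAdd x))⁻¹ * radixZpowersHom w k m (.ofAdd y)) =
      c * ((∑ i, |x i - y i| : ℤ) : ℝ) := by
  have hv : ∑ i, |(y - x) i| ≤ 2 * k := by
    have := Finset.sum_le_sum fun i (_ : i ∈ Finset.univ) => abs_sub (y i) (x i)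
    rw [Finset.sum_add_distrib] at this
    exact this.trans (by omega)
  rw [← map_inv, ← map_mul, ← ofAdd_neg, ← ofAdd_add, neg_add_eq_sub,
    GroupSeminorm.centralInfConv_map_eq fun u hu => ?_, l1Seminorm.nsmul_apply]
  · simp only [Pi.sub_apply, abs_sub_comm]
  simp only [l1Seminorm.nsmul_apply] at hu ⊢
  have hlt : ∑ i, |u i| < ∑ i, |(y - x) i| := by
    exact_mod_cast lt_of_mul_lt_mul_left hu c.cast_nonneg
  have hne : radixHom (4 * k + 1) m (y - x) - radixHom (4 * k + 1) m u ≠ 0 := fun h => by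
    rw [radixHom_injOn (by omega) (sub_eq_zero.1 h)] at hlt
    exact hlt.false
  have hpow : (radixZpowersHom w k m (.ofAdd u))⁻¹ * radixZpowersHom w k m (.ofAdd (y - x)) =
      w ^ (radixHom (4 * k + 1) m (y - x) - radixHom (4 * k + 1) m u) := by
    simp [radixZpowersHom, ← zpow_neg, ← zpow_add, neg_add_eq_sub]
  have hv' : ((∑ i, |(y - x) i| : ℤ) : ℝ) ≤ 2 * k := mod_cast hv
  rw [hpow]
  nlinarith [hfar _ hne, (c.cast_nonneg : (0 : ℝ) ≤ c)]

end RadixEmbedding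

theorem inductive_step_general {G : Type*} [Group G]
    (z : G) (hz : z ∈ Subgroup.center G) (hzord : ¬ IsOfFinOrder z)
    (dG : G → G → ℝ) (hdG : IsProperLeftInvMetric dG) :
    ∀ k m R : ℕ, ∃ dω : G → G → ℝ, IsProperLeftInvMetric dω ∧
      (∀ g : G, dω 1 g ≤ dG 1 g) ∧
      (∀ g : G, dω 1 g ≤ (R : ℝ) → dG 1 g = dω 1 g) ∧
      (∃ f : (Fin m → ℤ) → G, (∀ x y : Fin m → ℤ, f (x + y) = f x * f y) ∧
        ∃ C : ℝ, 1 ≤ C ∧ ∀ x y : Fin m → ℤ,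
          (∑ i, |x i|) ≤ (k : ℤ) → (∑ i, |y i|) ≤ (k : ℤ) →
          dω (f x) (f y) = C * ((∑ i, |x i - y i| : ℤ) : ℝ)) := by
  intro k m R
  let N := hdG.groupSeminorm
  have hN : ∀ K : ℝ, {g | N g ≤ K}.Finite := hdG.2.2.2.2
  obtain ⟨t, ht⟩ := exists_pow_lt_apply_zpow hN hzord (2 * k * (R + 1 : ℕ))
  let φ := radixZpowersHom (z ^ t) k m
  have hφ := radixZpowersHom_mem_center (pow_mem hz t) k m
  let ψ := N.centralInfConv ((R + 1) • l1Seminorm (Fin m)) φ hφ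
  have hψ : ∀ g, ψ g < R + 1 → ψ g = dG 1 g := fun g =>
    GroupSeminorm.centralInfConv_eq_of_lt fun _ => mod_cast l1Seminorm.le_nsmul_apply (R + 1)
  refine ⟨fun x y => ψ (x⁻¹ * y), ψ.isProperLeftInvMetric (fun g hg => ?_)
    (GroupSeminorm.finite_centralInfConv_le (l1Seminorm.finite_nsmul_le R.succ_ne_zero) hN),
    fun g => by simp only [inv_one, one_mul]; exact GroupSeminorm.centralInfConv_le g,
    fun g hg => ?_, fun x => φ (.ofAdd x), fun x y => by simp [ofAdd_add], R + 1, by simp,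
    fun x y hx hy => by simpa using centralInfConv_radixZpowersHom (pow_mem hz t) ht hx hy⟩
  · exact ((hdG.1 1 g).1 ((hψ g (by rw [hg]; positivity)).symm.trans hg)).symm
  · simp only [inv_one, one_mul] at hg ⊢
    exact (hψ g (by linarith)).symm

/-- Inductive step (Lemma 4.1): given a proper left-invariant metric on a
finitely generated group whose center has an element of infinite order, one can
modify it, keeping a large ball, so that a large `ℓ¹`-ball of `ℤᵐ` dilates into
the group. -/
theorem inductive_step {G : Type*} [Group G] (hFG : Group.FG G)
    (z : G) (hz : z ∈ Subgroup.center G) (hzord : ¬ IsOfFinOrder z)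
    (dG : G → G → ℝ) (hdG : IsProperLeftInvMetric dG) :
    ∀ k m R : ℕ, ∃ dω : G → G → ℝ, IsProperLeftInvMetric dω ∧
      (∀ g : G, dω 1 g ≤ dG 1 g) ∧
      (∀ g : G, dω 1 g ≤ (R : ℝ) → dG 1 g = dω 1 g) ∧
      (∃ f : (Fin m → ℤ) → G, (∀ x y : Fin m → ℤ, f (x + y) = f x * f y) ∧
        ∃ C : ℝ, 1 ≤ C ∧ ∀ x y : Fin m → ℤ,
          (∑ i, |x i|) ≤ (k : ℤ) → (∑ i, |y i|) ≤ (k : ℤ) →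
          dω (f x) (f y) = C * ((∑ i, |x i - y i| : ℤ) : ℝ)) :=
  inductive_step_general z hz hzord dG hdG
end

section
/- There exists a proper left-invariant metric d on ℤ such that asdim_AN(ℤ, d) = ∞. In particular, the Assouad-Nagata dimension of (ℤ,d) is not equal to 1 for every proper left-invariant metric d. -/
def IsProperInvMetricZ (d : ℤ → ℤ → ℝ) : Prop :=
  (∀ x y, d x y = 0 ↔ x = y) ∧
  (∀ x y, d x y = d y x) ∧
  (∀ x y z, d x z ≤ d x y + d y z) ∧
  (∀ a x y, d (a + x) (a + y) = d x y) ∧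
  (∀ K : ℝ, {n : ℤ | d 0 n ≤ K}.Finite)
/-!
The metric is a weighted word metric on `ℤ`. Besides `±1` of weight `1`, every level `ℓ`, coding
a pair `(n, q) = ℓ.unpair`, contributes the sums `∑ εᵢ uᵢ` (`εᵢ ∈ {-1, 0, 1}`) with a weight `w`
that grows fast with `ℓ`. Here `uᵢ ≡ δᵢⱼ` modulo distinct primes `pⱼ > 2Λ`, where
`Λ = (w + 1)(q + 1)(w + 1)`, and there are as many `uᵢ` as the Hales-Jewett theorem needs for
`n + 1` colours and lines of length `Λ + 1`.

Given a cover by `n + 1` sets, Hales-Jewett applied to `v ↦ ∑ vᵢ uᵢ` gives a set containing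
`a + tδ` for `t ≤ Λ`, with `δ = ∑_{i ∈ A} uᵢ` a generator of weight `w`: a chain at scale `w + 1`.
Modulo `pᵢ` (`i ∈ A`), its length `Λδ` is `≡ Λ`, while each generator lighter than
`(q + 1)(w + 1)` is congruent to an integer of absolute value at most `w + 1` times its weight
(lower levels are smaller than `w`, level `ℓ` generators are `≡ εᵢ`, higher levels are heavier).
A word for `Λδ` lighter than `(q + 1)(w + 1)` would thus give `Λ` a residue too small for it, so
the chain has diameter at least `(q + 1)(w + 1)`, beyond any control `C s + k` with `q ≥ C + |k|`.
-/

open Combinatorics Finset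

namespace IntWordMetric

/-- Generators are pairs `(value, weight)`; `HasWord S z K` says that `z` is a sum of generators
of total weight `K`. -/
inductive HasWord (S : Set (ℤ × ℕ)) : ℤ → ℕ → Prop
  | nil : HasWord S 0 0
  | cons {g : ℤ × ℕ} {z : ℤ} {K : ℕ} : g ∈ S → HasWord S z K → HasWord S (g.1 + z) (g.2 + K)

-- `0` when `z` is not a sum of generators
noncomputable def wordNorm (S : Set (ℤ × ℕ)) (z : ℤ) : ℕ := sInf {K | HasWord S z K}

noncomputable def wordDist (S : Set (ℤ × ℕ)) (x y : ℤ) : ℝ := wordNorm S (x - y)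

variable {S : Set (ℤ × ℕ)}

namespace HasWord

theorem single {g : ℤ × ℕ} (hg : g ∈ S) : HasWord S g.1 g.2 := by
  simpa using cons hg nil

theorem add {x y : ℤ} {K L : ℕ} (hx : HasWord S x K) (hy : HasWord S y L) :
    HasWord S (x + y) (K + L) := by
  induction hx with
  | nil => simpa using hy
  | cons hg _ ih => rw [add_assoc, add_assoc]; exact cons hg ih

theorem neg (hneg : ∀ g ∈ S, (-g.1, g.2) ∈ S) {z : ℤ} {K : ℕ} (h : HasWord S z K) :
    HasWord S (-z) K := by
  induction h with
  | nil => simpa using nil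
  | cons hg _ ih => rw [neg_add]; exact cons (hneg _ hg) ih

theorem natCast (h1 : ((1 : ℤ), 1) ∈ S) (n : ℕ) : HasWord S n n := by
  induction n with
  | zero => exact nil
  | succ n ih => simpa [add_comm] using cons h1 ih

theorem natAbs (h1 : ((1 : ℤ), 1) ∈ S) (hneg : ∀ g ∈ S, (-g.1, g.2) ∈ S) (z : ℤ) :
    HasWord S z z.natAbs := by
  obtain ⟨n, rfl | rfl⟩ := Int.eq_nat_or_neg z
  · simpa using natCast h1 n
  · simpa using (natCast h1 n).neg hneg

theorem eq_zero_of_weight_eq_zero (hpos : ∀ g ∈ S, 0 < g.2) {z : ℤ} {K : ℕ}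
    (h : HasWord S z K) (hK : K = 0) : z = 0 := by
  induction h with
  | nil => rfl
  | cons hg _ _ => have := hpos _ hg; omega

theorem exists_modEq {p : ℤ} {A : ℕ} {z : ℤ} {K : ℕ} (h : HasWord S z K)
    (hS : ∀ g ∈ S, g.2 ≤ K → ∃ r, g.1 ≡ r [ZMOD p] ∧ |r| ≤ A * g.2) :
    ∃ r, z ≡ r [ZMOD p] ∧ |r| ≤ A * K := by
  induction h with
  | nil => exact ⟨0, rfl, by simp⟩
  | @cons g z K hg _ ih =>
    obtain ⟨r, hr, hrA⟩ := hS g hg (Nat.le_add_right _ _)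
    obtain ⟨r', hr', hr'A⟩ := ih fun g' hg' hle => hS g' hg' (by omega)
    refine ⟨r + r', hr.add hr', ?_⟩
    calc |r + r'| ≤ |r| + |r'| := abs_add_le _ _
      _ ≤ A * g.2 + A * K := add_le_add hrA hr'A
      _ = A * ↑(g.2 + K) := by push_cast; ring

end HasWord

theorem wordNorm_le {z : ℤ} {K : ℕ} (h : HasWord S z K) : wordNorm S z ≤ K := Nat.sInf_le h

theorem hasWord_wordNorm (h1 : ((1 : ℤ), 1) ∈ S) (hneg : ∀ g ∈ S, (-g.1, g.2) ∈ S) (z : ℤ) :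
    HasWord S z (wordNorm S z) :=
  Nat.sInf_mem ⟨_, HasWord.natAbs h1 hneg z⟩

theorem wordNorm_neg (h1 : ((1 : ℤ), 1) ∈ S) (hneg : ∀ g ∈ S, (-g.1, g.2) ∈ S) (z : ℤ) :
    wordNorm S (-z) = wordNorm S z :=
  le_antisymm (wordNorm_le ((hasWord_wordNorm h1 hneg z).neg hneg))
    (by simpa using wordNorm_le ((hasWord_wordNorm h1 hneg (-z)).neg hneg))

theorem wordNorm_add_le (h1 : ((1 : ℤ), 1) ∈ S) (hneg : ∀ g ∈ S, (-g.1, g.2) ∈ S) (x y : ℤ) :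
    wordNorm S (x + y) ≤ wordNorm S x + wordNorm S y :=
  wordNorm_le ((hasWord_wordNorm h1 hneg x).add (hasWord_wordNorm h1 hneg y))

theorem wordNorm_eq_zero (h1 : ((1 : ℤ), 1) ∈ S) (hneg : ∀ g ∈ S, (-g.1, g.2) ∈ S)
    (hpos : ∀ g ∈ S, 0 < g.2) {z : ℤ} : wordNorm S z = 0 ↔ z = 0 :=
  ⟨(hasWord_wordNorm h1 hneg z).eq_zero_of_weight_eq_zero hpos,
    by rintro rfl; exact Nat.le_zero.mp (wordNorm_le .nil)⟩

theorem wordDist_self_add (h1 : ((1 : ℤ), 1) ∈ S) (hneg : ∀ g ∈ S, (-g.1, g.2) ∈ S)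
    (a z : ℤ) : wordDist S a (a + z) = wordNorm S z := by
  rw [wordDist, sub_add_cancel_left, wordNorm_neg h1 hneg]

theorem finite_setOf_wordNorm_le (h1 : ((1 : ℤ), 1) ∈ S) (hneg : ∀ g ∈ S, (-g.1, g.2) ∈ S)
    (hpos : ∀ g ∈ S, 0 < g.2) (hbdd : ∀ K : ℕ, ∃ A : ℕ, ∀ g ∈ S, g.2 ≤ K → |g.1| ≤ A)
    (K : ℕ) : {z | wordNorm S z ≤ K}.Finite := by
  obtain ⟨A, hA⟩ := hbdd K
  refine (Set.finite_Icc (-(A * K : ℤ)) (A * K)).subset fun z (hz : wordNorm S z ≤ K) => ?_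
  -- modulo `0`, the residue of a word is its value
  obtain ⟨r, hr, hrA⟩ := (hasWord_wordNorm h1 hneg z).exists_modEq (p := 0) (A := A)
    fun g hg hgK => ⟨g.1, rfl, (hA g hg (hgK.trans hz)).trans
      (by exact_mod_cast Nat.le_mul_of_pos_right A (hpos g hg))⟩
  rw [← Int.modEq_zero_iff.mp hr] at hrA
  have : (A : ℤ) * wordNorm S z ≤ A * K := by gcongr
  exact abs_le.mp (hrA.trans this)

theorem isProperInvMetricZ_wordDist (h1 : ((1 : ℤ), 1) ∈ S)
    (hneg : ∀ g ∈ S, (-g.1, g.2) ∈ S) (hpos : ∀ g ∈ S, 0 < g.2)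
    (hbdd : ∀ K : ℕ, ∃ A : ℕ, ∀ g ∈ S, g.2 ≤ K → |g.1| ≤ A) :
    IsProperInvMetricZ (wordDist S) := by
  refine ⟨fun x y => ?_, fun x y => ?_, fun x y z => ?_, fun a x y => ?_, fun K => ?_⟩
  · simp [wordDist, wordNorm_eq_zero h1 hneg hpos, sub_eq_zero]
  · rw [wordDist, wordDist, ← neg_sub, wordNorm_neg h1 hneg]
  · have := wordNorm_add_le h1 hneg (x - y) (y - z)
    rw [sub_add_sub_cancel] at this
    simp only [wordDist]
    exact_mod_cast this
  · simp [wordDist]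
  · refine (finite_setOf_wordNorm_le h1 hneg hpos hbdd ⌊K⌋₊).subset fun n hn => ?_
    have hn : (wordNorm S (-n) : ℝ) ≤ K := by simpa [wordDist] using hn
    rw [wordNorm_neg h1 hneg] at hn
    exact Nat.le_floor hn

theorem le_wordNorm_of_modEq (h1 : ((1 : ℤ), 1) ∈ S) (hneg : ∀ g ∈ S, (-g.1, g.2) ∈ S)
    {p A m K : ℕ} {z : ℤ} (hS : ∀ g ∈ S, g.2 < K → ∃ r, g.1 ≡ r [ZMOD p] ∧ |r| ≤ A * g.2)
    (hz : z ≡ m [ZMOD p]) (hm : (A : ℤ) * (K - 1) < m) (hp : (m : ℤ) + A * (K - 1) < p) :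
    K ≤ wordNorm S z := by
  by_contra! hlt
  obtain ⟨r, hr, hrA⟩ := (hasWord_wordNorm h1 hneg z).exists_modEq (p := p) (A := A)
    fun g hg hgK => hS g hg (by omega)
  have hr_le : |r| ≤ A * (K - 1) := hrA.trans (by gcongr; omega)
  have hrm : r - m = 0 := by
    refine Int.eq_zero_of_abs_lt_dvd (hz.symm.trans hr).dvd ?_
    calc |r - m| ≤ |r| + |(m : ℤ)| := abs_sub _ _
      _ < p := by rw [Nat.abs_cast]; linarith
  rw [sub_eq_zero.mp hrm, Nat.abs_cast] at hr_le
  linarith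

theorem scaleChain_of_progression {X : Type*} [AddCommMonoid X] (d : X → X → ℝ) {s : ℝ}
    {U : Set X} {a δ : X} {Λ : ℕ} (hU : ∀ t ≤ Λ, a + t • δ ∈ U)
    (hd : ∀ t < Λ, d (a + t • δ) (a + (t + 1) • δ) < s) : ScaleChain d s U a (a + Λ • δ) :=
  ⟨Λ, fun t => a + (t : ℕ) • δ, fun t => hU t (Nat.lt_succ_iff.mp t.2), by simp, rfl,
    fun t => hd t t.2⟩

theorem not_asdimANLe_of_forall_exists_wide_chain {X : Type*} (d : X → X → ℝ) (n : ℕ)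
    (h : ∀ q : ℕ, ∃ s : ℝ, 1 ≤ s ∧ ∀ U : Fin (n + 1) → Set X, (∀ x, ∃ i, x ∈ U i) →
      ∃ i x y, ScaleChain d s (U i) x y ∧ ((q : ℝ) + 1) * s ≤ d x y) :
    ¬ ASDimANLe d n := by
  rintro ⟨C, -, k, hU⟩
  obtain ⟨s, hs, hchain⟩ := h ⌈C + |k|⌉₊
  obtain ⟨U, hcov, hbd⟩ := hU s (by linarith)
  obtain ⟨i, x, y, hxy, hwide⟩ := hchain U hcov
  have hq : C + |k| ≤ ⌈C + |k|⌉₊ := Nat.le_ceil _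
  nlinarith [hbd i x y hxy, le_abs_self k, mul_le_mul_of_nonneg_right hq (by linarith : 0 ≤ s),
    mul_le_mul_of_nonneg_left hs (abs_nonneg k)]

theorem sum_line_apply_smul {ι M : Type*} [Fintype ι] [AddCommMonoid M] {Λ : ℕ}
    (l : Line (Fin (Λ + 1)) ι) (v : ι → M) (x : Fin (Λ + 1)) :
    ∑ j, (l x j : ℕ) • v j =
      ∑ j, (l 0 j : ℕ) • v j + (x : ℕ) • ∑ j with l.idxFun j = none, v j := by
  classical
  rw [smul_sum, sum_filter, ← sum_add_distrib]
  refine sum_congr rfl fun j _ => ?_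
  cases h : l.idxFun j <;> simp [h]

theorem exists_mono_progression (M : Type*) [AddCommMonoid M] (Λ m : ℕ) :
    ∃ N, ∀ (u : Fin N → M) (c : M → Fin m), ∃ A : Finset (Fin N), A.Nonempty ∧
      ∃ a, ∀ t ≤ Λ, c (a + t • ∑ i ∈ A, u i) = c a := by
  classical
  obtain ⟨ι, _, hι⟩ := Line.exists_mono_in_high_dimension (Fin (Λ + 1)) (Fin m)
  let e := Fintype.equivFin ι
  refine ⟨Fintype.card ι, fun u c => ?_⟩
  obtain ⟨l, col, hl⟩ := hι fun v => c (∑ j, (v j : ℕ) • u (e j))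
  obtain ⟨j₀, hj₀⟩ := l.proper
  refine ⟨(univ.filter fun j => l.idxFun j = none).map e.toEmbedding,
    ⟨e j₀, mem_map_of_mem _ (by simpa using hj₀)⟩, ∑ j, (l 0 j : ℕ) • u (e j), fun t ht => ?_⟩
  have hpt : c (∑ j, (l ⟨t, Nat.lt_succ_of_le ht⟩ j : ℕ) • u (e j)) = col := hl _
  rw [sum_line_apply_smul l (fun j => u (e j))] at hpt
  rw [sum_map, show c _ = col from hl 0]
  exact hpt

theorem exists_modEq_basis {ι : Type*} [Fintype ι] [DecidableEq ι] (p : ι → ℕ)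
    (hp : ∀ i, p i ≠ 0) (hcop : Pairwise fun i j => Nat.Coprime (p i) (p j)) :
    ∃ u : ι → ℕ, ∀ i j, u i ≡ if i = j then 1 else 0 [MOD p j] :=
  ⟨fun i => Nat.chineseRemainderOfFinset (fun j => if i = j then 1 else 0) p univ
      (fun j _ => hp j) fun _ _ _ _ hjk => hcop hjk,
    fun _ j => (Nat.chineseRemainderOfFinset _ _ _ _ _).2 j (mem_univ j)⟩

theorem sum_mul_modEq_of_basis {ι : Type*} [Fintype ι] [DecidableEq ι] {p u : ι → ℕ}
    (hu : ∀ i j, u i ≡ if i = j then 1 else 0 [MOD p j]) (ε : ι → ℤ) (j : ι) :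
    ∑ i, ε i * u i ≡ ε j [ZMOD p j] :=
  calc ∑ i, ε i * (u i : ℤ) ≡ ∑ i, ε i * ((if i = j then 1 else 0 : ℕ) : ℤ) [ZMOD p j] :=
        Int.ModEq.sum fun i _ => (Int.natCast_modEq_iff.mpr (hu i j)).mul_left _
    _ = ε j := by simp

def levelTarget (ℓ w : ℕ) : ℕ := (ℓ.unpair.2 + 1) * (w + 1)

def levelLength (ℓ w : ℕ) : ℕ := (w + 1) * levelTarget ℓ w

noncomputable def levelDim (ℓ w : ℕ) : ℕ :=
  (exists_mono_progression ℤ (levelLength ℓ w) (ℓ.unpair.1 + 1)).choose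

noncomputable def levelModulus (ℓ w : ℕ) (i : Fin (levelDim ℓ w)) : ℕ :=
  Nat.nth Nat.Prime (2 * levelLength ℓ w + i)

theorem levelModulus_ne_zero (ℓ w : ℕ) (i : Fin (levelDim ℓ w)) : levelModulus ℓ w i ≠ 0 :=
  (Nat.prime_nth_prime _).ne_zero

theorem two_mul_levelLength_lt_levelModulus (ℓ w : ℕ) (i : Fin (levelDim ℓ w)) :
    2 * levelLength ℓ w < levelModulus ℓ w i := by
  have := Nat.add_two_le_nth_prime (2 * levelLength ℓ w + i)
  unfold levelModulus
  omega

theorem levelModulus_coprime (ℓ w : ℕ) :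
    Pairwise fun i j => Nat.Coprime (levelModulus ℓ w i) (levelModulus ℓ w j) := fun i j hij =>
  (Nat.coprime_primes (Nat.prime_nth_prime _) (Nat.prime_nth_prime _)).mpr fun h =>
    hij (Fin.ext (by have := Nat.nth_injective Nat.infinite_setOfPred_prime h; omega))

noncomputable def levelBasis (ℓ w : ℕ) : Fin (levelDim ℓ w) → ℕ :=
  (exists_modEq_basis _ (levelModulus_ne_zero ℓ w) (levelModulus_coprime ℓ w)).choose

theorem levelBasis_modEq (ℓ w : ℕ) (i j : Fin (levelDim ℓ w)) :
    levelBasis ℓ w i ≡ if i = j then 1 else 0 [MOD levelModulus ℓ w j] :=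
  (exists_modEq_basis _ (levelModulus_ne_zero ℓ w) (levelModulus_coprime ℓ w)).choose_spec i j

-- so that, seen from level `ℓ`, lower levels are small and higher levels heavy
noncomputable def levelWeight : ℕ → ℕ
  | 0 => 1
  | ℓ + 1 => levelWeight ℓ + (∑ i, levelBasis ℓ (levelWeight ℓ) i) +
      levelTarget ℓ (levelWeight ℓ)

def levelGenerators (ℓ : ℕ) : Set ℤ :=
  {z | ∃ ε : Fin (levelDim ℓ (levelWeight ℓ)) → ℤ, (∀ i, |ε i| ≤ 1) ∧
    z = ∑ i, ε i * levelBasis ℓ (levelWeight ℓ) i}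

def generators : Set (ℤ × ℕ) :=
  {g | g = (1, 1) ∨ g = (-1, 1) ∨ ∃ ℓ, g.2 = levelWeight ℓ ∧ g.1 ∈ levelGenerators ℓ}

theorem levelWeight_strictMono : StrictMono levelWeight :=
  strictMono_nat_of_lt_succ fun ℓ => by
    have : 0 < levelTarget ℓ (levelWeight ℓ) := by unfold levelTarget; positivity
    simp only [levelWeight]
    omega

theorem levelWeight_pos (ℓ : ℕ) : 0 < levelWeight ℓ :=
  lt_of_lt_of_le (by simp [levelWeight]) (levelWeight_strictMono.monotone (Nat.zero_le ℓ))

theorem sum_levelBasis_add_levelTarget_le {ℓ ℓ' : ℕ} (h : ℓ < ℓ') :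
    (∑ i, levelBasis ℓ (levelWeight ℓ) i) + levelTarget ℓ (levelWeight ℓ) ≤ levelWeight ℓ' :=
  calc _ ≤ levelWeight (ℓ + 1) := by simp only [levelWeight]; omega
    _ ≤ levelWeight ℓ' := levelWeight_strictMono.monotone h

theorem abs_le_of_mem_levelGenerators {ℓ : ℕ} {z : ℤ} (hz : z ∈ levelGenerators ℓ) :
    |z| ≤ ∑ i, levelBasis ℓ (levelWeight ℓ) i := by
  obtain ⟨ε, hε, rfl⟩ := hz
  push_cast
  refine (abs_sum_le_sum_abs _ _).trans (sum_le_sum fun i _ => ?_)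
  rw [abs_mul, Nat.abs_cast]
  exact mul_le_of_le_one_left (Nat.cast_nonneg _) (hε i)

theorem one_mem_generators : ((1 : ℤ), 1) ∈ generators := Or.inl rfl

theorem neg_mem_generators : ∀ g ∈ generators, (-g.1, g.2) ∈ generators := by
  rintro g (rfl | rfl | ⟨ℓ, hg, ε, hε, hz⟩)
  · exact Or.inr (Or.inl rfl)
  · exact Or.inl rfl
  · refine Or.inr (Or.inr ⟨ℓ, hg, -ε, fun i => by simpa using hε i, ?_⟩)
    simp [hz]

theorem weight_pos_of_mem_generators : ∀ g ∈ generators, 0 < g.2 := by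
  rintro g (rfl | rfl | ⟨ℓ, hg, -⟩)
  · exact one_pos
  · exact one_pos
  · exact hg ▸ levelWeight_pos ℓ

theorem abs_le_of_mem_generators (K : ℕ) :
    ∀ g ∈ generators, g.2 ≤ K → |g.1| ≤ levelWeight (K + 1) := by
  have h1 : (1 : ℤ) ≤ levelWeight (K + 1) := by exact_mod_cast levelWeight_pos (K + 1)
  rintro g (rfl | rfl | ⟨ℓ, hg, hz⟩) hK
  · simpa using h1
  · simpa using h1
  · have hℓ : ℓ < K + 1 := by
      have := levelWeight_strictMono.id_le ℓ
      simp only [id] at this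
      omega
    calc |g.1| ≤ ∑ i, levelBasis ℓ (levelWeight ℓ) i := abs_le_of_mem_levelGenerators hz
      _ ≤ levelWeight (K + 1) := by
        exact_mod_cast (Nat.le_add_right _ _).trans (sum_levelBasis_add_levelTarget_le hℓ)

theorem exists_small_residue_of_mem_generators {ℓ : ℕ}
    (i₀ : Fin (levelDim ℓ (levelWeight ℓ))) :
    ∀ g ∈ generators, g.2 < levelTarget ℓ (levelWeight ℓ) →
      ∃ r, g.1 ≡ r [ZMOD levelModulus ℓ (levelWeight ℓ) i₀] ∧
        |r| ≤ ((levelWeight ℓ + 1 : ℕ) : ℤ) * g.2 := by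
  have hw : (1 : ℤ) ≤ levelWeight ℓ := by exact_mod_cast levelWeight_pos ℓ
  rintro g (rfl | rfl | ⟨ℓ', hg, hz⟩) hlt
  · exact ⟨1, rfl, by norm_num⟩
  · exact ⟨-1, rfl, by norm_num⟩
  have hg1 : (1 : ℤ) ≤ g.2 := by exact_mod_cast hg ▸ levelWeight_pos ℓ'
  rcases lt_trichotomy ℓ' ℓ with h | rfl | h
  · refine ⟨g.1, rfl, ?_⟩
    have hsmall : |g.1| ≤ levelWeight ℓ := (abs_le_of_mem_levelGenerators hz).trans
      (by exact_mod_cast (Nat.le_add_right _ _).trans (sum_levelBasis_add_levelTarget_le h))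
    push_cast
    nlinarith
  · obtain ⟨ε, hε, hz⟩ := hz
    refine ⟨ε i₀, by rw [hz]; exact sum_mul_modEq_of_basis (levelBasis_modEq _ _) ε i₀, ?_⟩
    push_cast
    nlinarith [hε i₀]
  · have := sum_levelBasis_add_levelTarget_le h
    omega

theorem sum_levelBasis_mem_levelGenerators {ℓ : ℕ}
    (A : Finset (Fin (levelDim ℓ (levelWeight ℓ)))) :
    ∑ i ∈ A, (levelBasis ℓ (levelWeight ℓ) i : ℤ) ∈ levelGenerators ℓ :=
  ⟨fun i => if i ∈ A then 1 else 0, fun i => by by_cases hi : i ∈ A <;> simp [hi],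
    by simp [ite_mul, sum_ite_mem]⟩

theorem sum_levelBasis_modEq_one {ℓ w : ℕ} {A : Finset (Fin (levelDim ℓ w))}
    {i₀ : Fin (levelDim ℓ w)} (hi₀ : i₀ ∈ A) :
    ∑ i ∈ A, (levelBasis ℓ w i : ℤ) ≡ 1 [ZMOD levelModulus ℓ w i₀] := by
  simpa [ite_mul, sum_ite_mem, hi₀] using
    sum_mul_modEq_of_basis (levelBasis_modEq ℓ w) (fun i => if i ∈ A then 1 else 0) i₀

theorem levelTarget_le_wordNorm {ℓ : ℕ} {A : Finset (Fin (levelDim ℓ (levelWeight ℓ)))}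
    {i₀ : Fin (levelDim ℓ (levelWeight ℓ))} (hi₀ : i₀ ∈ A) :
    levelTarget ℓ (levelWeight ℓ) ≤ wordNorm generators
      (levelLength ℓ (levelWeight ℓ) • ∑ i ∈ A, (levelBasis ℓ (levelWeight ℓ) i : ℤ)) := by
  have hΛ : (levelLength ℓ (levelWeight ℓ) : ℤ) =
      (levelWeight ℓ + 1) * levelTarget ℓ (levelWeight ℓ) := by
    simp [levelLength]
  have hp : 2 * (levelLength ℓ (levelWeight ℓ) : ℤ) < levelModulus ℓ (levelWeight ℓ) i₀ := by
    exact_mod_cast two_mul_levelLength_lt_levelModulus ℓ _ i₀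
  refine le_wordNorm_of_modEq one_mem_generators neg_mem_generators
    (m := levelLength ℓ (levelWeight ℓ)) (exists_small_residue_of_mem_generators i₀) ?_ ?_ ?_
  · simpa [nsmul_eq_mul] using (sum_levelBasis_modEq_one hi₀).mul_left (levelLength ℓ _ : ℤ)
  · push_cast
    nlinarith
  · push_cast
    nlinarith

theorem exists_wide_chain (ℓ : ℕ) (U : Fin (ℓ.unpair.1 + 1) → Set ℤ)
    (hU : ∀ x, ∃ i, x ∈ U i) :
    ∃ i x y, ScaleChain (wordDist generators) (levelWeight ℓ + 1) (U i) x y ∧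
      ((ℓ.unpair.2 : ℝ) + 1) * (levelWeight ℓ + 1) ≤ wordDist generators x y := by
  set w := levelWeight ℓ
  choose c hc using hU
  obtain ⟨A, ⟨i₀, hi₀⟩, a, hprog⟩ : ∃ A : Finset (Fin (levelDim ℓ w)), A.Nonempty ∧
      ∃ a, ∀ t ≤ levelLength ℓ w, c (a + t • ∑ i ∈ A, (levelBasis ℓ w i : ℤ)) = c a :=
    (exists_mono_progression ℤ (levelLength ℓ w) (ℓ.unpair.1 + 1)).choose_spec _ c
  set δ := ∑ i ∈ A, (levelBasis ℓ w i : ℤ)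
  have hδ : wordNorm generators δ ≤ w := wordNorm_le (HasWord.single (g := (δ, w))
    (Or.inr (Or.inr ⟨ℓ, rfl, sum_levelBasis_mem_levelGenerators A⟩)))
  have hfar : levelTarget ℓ w ≤ wordNorm generators (levelLength ℓ w • δ) :=
    levelTarget_le_wordNorm hi₀
  refine ⟨c a, a, a + levelLength ℓ w • δ,
    scaleChain_of_progression _ (fun t ht => hprog t ht ▸ hc _) fun t _ => ?_, ?_⟩
  · rw [succ_nsmul, ← add_assoc, wordDist_self_add one_mem_generators neg_mem_generators]
    exact_mod_cast Nat.lt_succ_of_le hδ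
  · rw [wordDist_self_add one_mem_generators neg_mem_generators]
    exact_mod_cast hfar

theorem isProperInvMetricZ_wordDist_generators : IsProperInvMetricZ (wordDist generators) :=
  isProperInvMetricZ_wordDist one_mem_generators neg_mem_generators
    weight_pos_of_mem_generators fun K => ⟨_, abs_le_of_mem_generators K⟩

theorem not_asdimANLe_wordDist_generators (n : ℕ) : ¬ ASDimANLe (wordDist generators) n :=
  not_asdimANLe_of_forall_exists_wide_chain _ n fun q =>
    ⟨levelWeight (Nat.pair n q) + 1, by simp, by
      have h := exists_wide_chain (Nat.pair n q)
      rwa [Nat.unpair_pair] at h⟩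

end IntWordMetric

/-- There is a proper (translation-)invariant metric on `ℤ` of infinite
asymptotic Assouad-Nagata dimension; in particular its Assouad-Nagata dimension
is not `1`. -/
theorem exists_metric_on_Z_infinite_asdimAN :
    ∃ d : ℤ → ℤ → ℝ, IsProperInvMetricZ d ∧ (∀ n : ℕ, ¬ ASDimANLe d n) ∧
      ¬ ASDimANLe d 1 :=
  ⟨IntWordMetric.wordDist IntWordMetric.generators,
    IntWordMetric.isProperInvMetricZ_wordDist_generators,
    IntWordMetric.not_asdimANLe_wordDist_generators,
    IntWordMetric.not_asdimANLe_wordDist_generators 1⟩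
end
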